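/- arXiv:0912.0335 — 6 statements merged into one kernel-verified Lean document; each statement's English description precedes it below -/
import Mathlib

section
/- Let r ≥ 2 and let s₁,…,s_r be natural numbers (each positive). Then the sum over all permutations π of {1,…,r} of the product ∏_{j=2}^{r} s_{π(j)} / (∑_{i=1}^{j} s_{π(i)}) equals 1. -/
/-!
With suffix sums instead of prefix sums (reverse `π`), `∏_k s_{π k} / (s_{π k} + ⋯ + s_{π (r-1)})`
is the probability that drawing the items without replacement, each time with probability
proportional to its weight, yields the order `π`; so these products sum to `1`. Formally: split
off the first draw, whose factor is `s_p / ∑ s`, apply induction to the remaining items, and use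
`∑_p s_p / ∑ s = 1`. The factor of the statement at `j = 0` is `s/s = 1`, so it may be omitted.
-/

open Finset Equiv

lemma Fin.prod_div_sum_Ici_succ {K : Type*} [Semifield K] {n : ℕ} (f : Fin (n + 1) → K) :
    ∏ k, f k / ∑ i ∈ Ici k, f i =
      (f 0 / ∑ i, f i) * ∏ k : Fin n, f k.succ / ∑ i ∈ Ici k, f i.succ := by
  rw [Fin.prod_univ_succ]
  simp [← Fin.map_succEmb_Ici]

section OrderedSemifield

variable {K : Type*} [Semifield K] [LinearOrder K] [IsStrictOrderedRing K]

theorem sum_perm_prod_div_sum_Ici {n : ℕ} (s : Fin n → K) (hs : ∀ i, 0 < s i) :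
    ∑ π : Perm (Fin n), ∏ k, s (π k) / ∑ i ∈ Ici k, s (π i) = 1 := by
  induction n with
  | zero => simp
  | succ n ih =>
    have htotal : ∑ i, s i ≠ 0 := (sum_pos (fun i _ => hs i) univ_nonempty).ne'
    have hsplit (p : Fin (n + 1)) (e : Perm (Fin n)) :
        ∏ k, s (Perm.decomposeFin.symm (p, e) k) /
            ∑ i ∈ Ici k, s (Perm.decomposeFin.symm (p, e) i) =
          (s p / ∑ i, s i) *
            ∏ k, s (swap 0 p (e k).succ) / ∑ i ∈ Ici k, s (swap 0 p (e i).succ) := by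
      rw [Fin.prod_div_sum_Ici_succ, Equiv.sum_comp]
      simp only [Perm.decomposeFin_symm_apply_zero, Perm.decomposeFin_symm_apply_succ]
    rw [← Perm.decomposeFin.symm.sum_comp, Fintype.sum_prod_type]
    have hrest (p : Fin (n + 1)) := ih (fun k => s (swap 0 p k.succ)) fun _ => hs _
    simp only [hsplit, ← mul_sum, hrest, mul_one, ← sum_div, div_self htotal]

theorem sum_perm_prod_div_sum_Iic {n : ℕ} (s : Fin n → K) (hs : ∀ i, 0 < s i) :
    ∑ π : Perm (Fin n), ∏ j, s (π j) / ∑ i ∈ Iic j, s (π i) = 1 := by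
  rw [← sum_perm_prod_div_sum_Ici s hs]
  refine Fintype.sum_equiv (Equiv.mulRight Fin.revPerm) _ _ fun π => ?_
  refine Fintype.prod_equiv Fin.revPerm _ _ fun j => ?_
  simp only [coe_mulRight, Perm.mul_apply, Fin.revPerm_apply, ← Fin.map_revPerm_Iic, sum_map]
  simp

end OrderedSemifield

/-- Lemma (permutation identity): for `r ≥ 2` and positive naturals `s₁,…,s_r`,
the sum over all permutations `π` of `{1,…,r}` of
`∏_{j=2}^{r} s_{π(j)} / (s_{π(1)} + ⋯ + s_{π(j)})` equals `1`.
(Indices are 0-based: `j` ranges over the nonzero elements of `Fin r`, and the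
denominator is the partial sum `∑_{i ≤ j} s_{π(i)}`.) -/
theorem stmt_0 (r : ℕ) (hr : 2 ≤ r) (s : Fin r → ℕ) (hs : ∀ i, 0 < s i) :
    ∑ π : Equiv.Perm (Fin r),
      ∏ j ∈ Finset.univ.filter (fun j : Fin r => j ≠ ⟨0, by omega⟩),
        ((s (π j) : ℝ) / ∑ i ∈ Finset.Iic j, (s (π i) : ℝ)) = 1 := by
  have hpos (i : Fin r) : 0 < (s i : ℝ) := by exact_mod_cast hs i
  have hIic_zero : Iic (⟨0, by omega⟩ : Fin r) = {⟨0, by omega⟩} := by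
    ext i
    simp [Fin.le_def, Fin.ext_iff]
  rw [← sum_perm_prod_div_sum_Iic _ hpos]
  refine sum_congr rfl fun π _ => prod_filter_of_ne fun j _ hj => ?_
  rintro rfl
  exact hj (by rw [hIic_zero, sum_singleton, div_self (hpos _).ne'])
end

section
/- Let T be a uniformly random Cayley tree (labelled tree) on n vertices with a distinguished root r, and let v be a uniformly random vertex of T. Then for each k with 1 ≤ k ≤ n, the probability that the graph distance from r to v equals k−1 is k·(n)_k / n^{k+1}, where (n)_k = n(n−1)⋯(n−k+1). -/
/-!
A rooted labelled tree is the same as its parent map `f`: the root is fixed and every vertex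
reaches it, and `dist(r, v)` is the number of steps `v` needs to get there. When that number is
`k - 1`, cutting out the path `v, f v, …, r` leaves a rooted forest whose `k` roots are the
vertices of the path. There are `(n)_k` such paths and, for each, `k n^(n-k-1)` forests with
those roots, so `k (n)_k n^(n-k-1)` of the `n^n` triples `(T, r, v)` qualify.

The forest count `p n^(n-p-1)` follows by induction on the number of non-roots: a forest with
roots `P` is a forest with roots `P ∪ {x}` together with a parent for `x` outside the subtree of
`x`, and relabelling the roots shows that, summed over all forests, each of the `p + 1` roots has
the same number of descendants.
-/

open Function Finset

section HitTime

variable {α : Type*} {f g : α → α} {P : Set α} {x : α} {m t : ℕ}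

-- `0` when the orbit of `x` never meets `P`.
noncomputable def hitTime (f : α → α) (P : Set α) (x : α) : ℕ := sInf {m | f^[m] x ∈ P}

noncomputable def hitPoint (f : α → α) (P : Set α) (x : α) : α := f^[hitTime f P x] x

lemma hitPoint_mem (h : ∃ m, f^[m] x ∈ P) : hitPoint f P x ∈ P := Nat.sInf_mem h

lemma iterate_notMem_of_lt_hitTime (hm : m < hitTime f P x) : f^[m] x ∉ P :=
  Nat.notMem_of_lt_sInf hm

lemma hitTime_eq (hmem : f^[t] x ∈ P) (hlt : ∀ m < t, f^[m] x ∉ P) : hitTime f P x = t :=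
  le_antisymm (Nat.sInf_le hmem) (not_lt.1 fun h => hlt _ h (hitPoint_mem ⟨t, hmem⟩))

lemma hitTime_of_mem (hx : x ∈ P) : hitTime f P x = 0 :=
  hitTime_eq hx fun _ h => absurd h (Nat.not_lt_zero _)

lemma hitTime_apply (hx : x ∉ P) (h : ∃ m, f^[m] x ∈ P) :
    hitTime f P x = hitTime f P (f x) + 1 := by
  obtain ⟨t, ht⟩ : ∃ t, hitTime f P x = t + 1 :=
    Nat.exists_eq_succ_of_ne_zero fun h0 => hx (by simpa [hitPoint, h0] using hitPoint_mem h)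
  have hmem : f^[t] (f x) ∈ P := by
    rw [← iterate_succ_apply, Nat.succ_eq_add_one, ← ht]; exact hitPoint_mem h
  rw [ht, hitTime_eq hmem fun m hm => by
    rw [← iterate_succ_apply]; exact iterate_notMem_of_lt_hitTime (by omega)]

lemma apply_ne_self_of_notMem (hx : x ∉ P) (h : ∃ m, f^[m] x ∈ P) : f x ≠ x := by
  intro hfix
  obtain ⟨m, hm⟩ := h
  exact hx (by rwa [iterate_fixed hfix] at hm)

lemma iterate_injOn_hitTime (h : ∃ m, f^[m] x ∈ P) :
    Set.InjOn (fun i => f^[i] x) (Set.Iic (hitTime f P x)) := by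
  intro i hi j hj hij
  by_contra hne
  wlog hlt : i < j generalizing i j
  · exact this hj hi hij.symm (Ne.symm hne) (by omega)
  have hhit : f^[hitTime f P x - j + i] x = hitPoint f P x := by
    simp only at hij
    rw [hitPoint, iterate_add_apply, hij, ← iterate_add_apply, Nat.sub_add_cancel hj]
  exact iterate_notMem_of_lt_hitTime (by simp at hj; omega) (hhit ▸ hitPoint_mem h)

lemma notMem_of_isPeriodicPt {p : ℕ} (hper : IsPeriodicPt f p x) (hp : 0 < p)
    (hP : ∀ j < p, f^[j] x ∉ P) (m : ℕ) : f^[m] x ∉ P := by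
  rw [← hper.iterate_mod_apply]
  exact hP _ (Nat.mod_lt _ hp)

lemma iterate_eq_of_eqOn_compl (hfg : ∀ z ∉ P, f z = g z) (hm : ∀ i < m, f^[i] x ∉ P) :
    g^[m] x = f^[m] x := by
  induction m with
  | zero => rfl
  | succ m ih =>
    rw [iterate_succ_apply', iterate_succ_apply', ih fun i hi => hm i (by omega),
      hfg _ (hm m (by omega))]

lemma iterate_hitTime_eq_of_eqOn_compl (hfg : ∀ z ∉ P, f z = g z) :
    g^[hitTime f P x] x = hitPoint f P x :=
  iterate_eq_of_eqOn_compl hfg fun _ => iterate_notMem_of_lt_hitTime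

lemma hitTime_eq_of_eqOn_compl (hfg : ∀ z ∉ P, f z = g z) (h : ∃ m, f^[m] x ∈ P) :
    hitTime g P x = hitTime f P x := by
  refine hitTime_eq ((iterate_hitTime_eq_of_eqOn_compl hfg).symm ▸ hitPoint_mem h) fun m hm => ?_
  rw [iterate_eq_of_eqOn_compl hfg fun i hi => iterate_notMem_of_lt_hitTime (hi.trans hm)]
  exact iterate_notMem_of_lt_hitTime hm

lemma hitPoint_eq_of_eqOn_compl (hfg : ∀ z ∉ P, f z = g z) (h : ∃ m, f^[m] x ∈ P) :
    hitPoint g P x = hitPoint f P x := by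
  rw [hitPoint, hitTime_eq_of_eqOn_compl hfg h, iterate_hitTime_eq_of_eqOn_compl hfg]

lemma exists_iterate_mem_of_eqOn_compl (hfg : ∀ z ∉ P, f z = g z) (h : ∃ m, f^[m] x ∈ P) :
    ∃ m, g^[m] x ∈ P :=
  ⟨_, (iterate_hitTime_eq_of_eqOn_compl hfg).symm ▸ hitPoint_mem h⟩

lemma iterate_conj_apply (σ : α ≃ α) (f : α → α) (m : ℕ) (x : α) :
    (σ.conj f)^[m] (σ x) = σ (f^[m] x) :=
  ((Semiconj.iterate_right (fun y => by simp) m : Semiconj σ f^[m] (σ.conj f)^[m]) x).symm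

lemma hitPoint_conj {σ : α ≃ α} (hσ : ∀ z, σ z ∈ P ↔ z ∈ P) :
    hitPoint (σ.conj f) P (σ x) = σ (hitPoint f P x) := by
  have : hitTime (σ.conj f) P (σ x) = hitTime f P x := by
    simp only [hitTime, iterate_conj_apply, hσ]
  rw [hitPoint, this, iterate_conj_apply, hitPoint]

end HitTime

section RootedForest

variable {α : Type*} {P : Set α} {f g : α → α} {x y : α}

/-- `f` maps every vertex to its parent in a rooted forest whose roots, the points of `P`,
are their own parents. -/
structure IsRootedForest (P : Set α) (f : α → α) : Prop where
  map_root : ∀ x ∈ P, f x = x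
  exists_iterate_mem : ∀ x, ∃ m, f^[m] x ∈ P

abbrev RootedForest (P : Set α) : Type _ := {f : α → α // IsRootedForest P f}

lemma IsRootedForest.conj {σ : α ≃ α} (hσ : ∀ z, σ z ∈ P ↔ z ∈ P) (hf : IsRootedForest P f) :
    IsRootedForest P (σ.conj f) where
  map_root x hx := by
    have : σ.symm x ∈ P := by rwa [← hσ, σ.apply_symm_apply]
    simp [hf.map_root _ this]
  exists_iterate_mem x := by
    obtain ⟨m, hm⟩ := hf.exists_iterate_mem (σ.symm x)
    exact ⟨m, by rwa [← σ.apply_symm_apply x, iterate_conj_apply, hσ]⟩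

def rootedForestConj {σ : α ≃ α} (hσ : ∀ z, σ z ∈ P ↔ z ∈ P) :
    RootedForest P ≃ RootedForest P :=
  σ.conj.subtypeEquiv fun f => ⟨IsRootedForest.conj hσ, fun h => by
    simpa [← Equiv.conj_symm] using h.conj (σ := σ.symm) fun z => by rw [← hσ, σ.apply_symm_apply]⟩

lemma card_hitPoint_eq_apply {σ : α ≃ α} (hσ : ∀ z, σ z ∈ P ↔ z ∈ P) (s : α) :
    Nat.card {p : RootedForest P × α // hitPoint p.1 P p.2 = s} =
      Nat.card {p : RootedForest P × α // hitPoint p.1 P p.2 = σ s} :=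
  Nat.card_congr <| ((rootedForestConj hσ).prodCongr σ).subtypeEquiv fun p => by
    simp [rootedForestConj, hitPoint_conj hσ]

lemma swap_mem_iff [DecidableEq α] {s t : α} (hs : s ∈ P) (ht : t ∈ P) (z : α) :
    Equiv.swap s t z ∈ P ↔ z ∈ P := by
  rw [Equiv.swap_apply_def]; split_ifs <;> simp_all

lemma apply_eq_update_of_notMem_insert [DecidableEq α] (f : α → α) (y : α) :
    ∀ z ∉ insert x P, f z = update f x y z :=
  fun _ hz => (update_of_ne (ne_of_mem_of_not_mem (Set.mem_insert x P) hz).symm ..).symm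

lemma IsRootedForest.update_self [DecidableEq α] (hf : IsRootedForest P f) (x : α) :
    IsRootedForest (insert x P) (update f x x) where
  map_root z hz := by
    rcases eq_or_ne z x with rfl | hzx
    · exact Function.update_self ..
    · rw [Function.update_of_ne hzx, hf.map_root z (hz.resolve_left hzx)]
  exists_iterate_mem z := by
    obtain ⟨m, hm⟩ := hf.exists_iterate_mem z
    exact exists_iterate_mem_of_eqOn_compl (apply_eq_update_of_notMem_insert f x)
      ⟨m, Set.mem_insert_of_mem x hm⟩

/-- Resetting the parent of `x` to itself cuts off the subtree of `x`, which therefore does not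
contain the old parent of `x`. -/
lemma IsRootedForest.hitPoint_update_self_ne [DecidableEq α] (hf : IsRootedForest P f)
    (hx : x ∉ P) : hitPoint (update f x x) (insert x P) (f x) ≠ x := by
  have hfx : ∃ m, f^[m] (f x) ∈ insert x P := by
    obtain ⟨m, hm⟩ := hf.exists_iterate_mem (f x)
    exact ⟨m, Set.mem_insert_of_mem x hm⟩
  rw [hitPoint_eq_of_eqOn_compl (apply_eq_update_of_notMem_insert f x) hfx]
  intro hcyc
  have hper : IsPeriodicPt f (hitTime f (insert x P) (f x) + 1) x := by
    rw [IsPeriodicPt, IsFixedPt, iterate_succ_apply]; exact hcyc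
  obtain ⟨m, hm⟩ := hf.exists_iterate_mem x
  refine notMem_of_isPeriodicPt hper (Nat.succ_pos _) (fun j hj => ?_) m hm
  cases j with
  | zero => exact hx
  | succ j =>
    rw [iterate_succ_apply]
    exact fun h => iterate_notMem_of_lt_hitTime (by omega) (Set.mem_insert_of_mem x h)

lemma IsRootedForest.update [DecidableEq α] (hg : IsRootedForest (insert x P) g) (hx : x ∉ P)
    (hy : hitPoint g (insert x P) y ≠ x) : IsRootedForest P (Function.update g x y) where
  map_root z hz := by
    rw [Function.update_of_ne (ne_of_mem_of_not_mem hz hx),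
      hg.map_root z (Set.mem_insert_of_mem x hz)]
  exists_iterate_mem z := by
    have hhit : ∀ w, (Function.update g x y)^[hitTime g (insert x P) w] w =
        hitPoint g (insert x P) w :=
      fun w => iterate_hitTime_eq_of_eqOn_compl (apply_eq_update_of_notMem_insert g y)
    have hyP : hitPoint g (insert x P) y ∈ P :=
      (hitPoint_mem (hg.exists_iterate_mem y)).resolve_left hy
    rcases hitPoint_mem (hg.exists_iterate_mem z) with hzx | hzP
    · refine ⟨hitTime g (insert x P) y + 1 + hitTime g (insert x P) z, ?_⟩
      rw [iterate_add_apply, hhit, hzx, iterate_succ_apply, Function.update_self, hhit]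
      exact hyP
    · exact ⟨_, (hhit z).symm ▸ hzP⟩

/-- Forests with root set `P` are forests with root set `insert x P` together with a new parent
for `x`, chosen outside the subtree of `x`. -/
def rootedForestInsertEquiv [DecidableEq α] (hx : x ∉ P) :
    RootedForest P ≃ {p : RootedForest (insert x P) × α // hitPoint p.1 (insert x P) p.2 ≠ x} where
  toFun f := ⟨(⟨update f.1 x x, f.2.update_self x⟩, f.1 x), f.2.hitPoint_update_self_ne hx⟩
  invFun p := ⟨update p.1.1.1 x p.1.2, p.1.1.2.update hx p.2⟩
  left_inv f := by ext1; simp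
  right_inv p := by
    obtain ⟨⟨⟨g, hg⟩, y⟩, hy⟩ := p
    have : g x = x := hg.map_root x (Set.mem_insert x P)
    ext1; ext1
    · ext1; simp [this]
    · simp

end RootedForest

section Counting

variable {α : Type*} [Fintype α]

lemma card_rootedForest_univ :
    Nat.card (RootedForest ((univ : Finset α) : Set α)) = 1 :=
  Nat.card_eq_one_iff_unique.2
    ⟨⟨fun f g => Subtype.ext <| funext fun z =>
      (f.2.map_root z (by simp)).trans (g.2.map_root z (by simp)).symm⟩,
    ⟨⟨id, fun _ _ => rfl, fun _ => ⟨0, by simp⟩⟩⟩⟩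

variable [DecidableEq α]

/-- Relabelling the roots shows that, summed over all forests, every root has the same number
of descendants. -/
lemma card_mul_card_hitPoint_eq {P : Finset α} {s : α} (hs : s ∈ P) :
    #P * Nat.card {p : RootedForest (P : Set α) × α // hitPoint p.1 P p.2 = s} =
      Nat.card (RootedForest (P : Set α)) * Fintype.card α := by
  have hsum : Nat.card (RootedForest (P : Set α) × α) =
      ∑ t : P, Nat.card {p : RootedForest (P : Set α) × α // hitPoint p.1 P p.2 = t} := by
    rw [← Nat.card_sigma]
    exact Nat.card_congr <| (Equiv.sigmaFiberEquiv fun p : RootedForest (P : Set α) × α =>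
      (⟨hitPoint p.1 P p.2, hitPoint_mem (p.1.2.exists_iterate_mem p.2)⟩ : P)).symm.trans
        (Equiv.sigmaCongrRight fun t => Equiv.subtypeEquivRight fun p => Subtype.ext_iff)
  have hconst : ∀ t : P, Nat.card {p : RootedForest (P : Set α) × α // hitPoint p.1 P p.2 = t} =
      Nat.card {p : RootedForest (P : Set α) × α // hitPoint p.1 P p.2 = s} := fun t => by
    rw [card_hitPoint_eq_apply (swap_mem_iff (P := P) hs t.2) s, Equiv.swap_apply_left]
  rw [← Nat.card_eq_fintype_card, ← Nat.card_prod, hsum, Fintype.sum_congr _ _ hconst,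
    sum_const, card_univ, Fintype.card_coe, smul_eq_mul]

lemma card_rootedForest_insert {P : Finset α} {x : α} (hx : x ∉ P) :
    (#P + 1) * Nat.card (RootedForest (P : Set α)) =
      #P * Fintype.card α * Nat.card (RootedForest ((insert x P : Finset α) : Set α)) := by
  have hsplit := Nat.card_congr <| Equiv.sumCompl
    fun p : RootedForest (insert x (P : Set α)) × α => hitPoint p.1 (insert x P) p.2 = x
  rw [Nat.card_sum, ← Nat.card_congr (rootedForestInsertEquiv (P := (P : Set α)) hx),
    Nat.card_prod, Nat.card_eq_fintype_card (α := α)] at hsplit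
  have hclass := card_mul_card_hitPoint_eq (mem_insert_self x P)
  rw [card_insert_of_notMem hx] at hclass
  rw [coe_insert] at hclass ⊢
  zify at hsplit hclass ⊢
  linear_combination ((#P : ℤ) + 1) * hsplit - hclass

/-- There are `p n^(n-p-1)` forests on `n` vertices with `p` given roots; the factor `n` avoids
truncated subtraction when `p = n`. -/
theorem card_rootedForest_mul (P : Finset α) :
    Nat.card (RootedForest (P : Set α)) * Fintype.card α =
      #P * Fintype.card α ^ (Fintype.card α - #P) := by
  induction hq : Fintype.card α - #P generalizing P with
  | zero =>
    obtain rfl : P = univ := eq_univ_of_card P (le_antisymm (card_le_univ P) (by omega))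
    rw [card_rootedForest_univ, card_univ]; ring
  | succ q ih =>
    obtain ⟨x, hx⟩ : ∃ x, x ∉ P := by
      by_contra! h
      rw [eq_univ_iff_forall.2 h, card_univ, Nat.sub_self] at hq
      exact Nat.zero_ne_add_one q hq
    have ih' := ih (insert x P) (by rw [card_insert_of_notMem hx]; omega)
    rw [card_insert_of_notMem hx] at ih'
    refine Nat.eq_of_mul_eq_mul_left (Nat.succ_pos #P) ?_
    calc (#P + 1) * (Nat.card (RootedForest (P : Set α)) * Fintype.card α)
        = #P * Fintype.card α *
            (Nat.card (RootedForest ((insert x P : Finset α) : Set α)) * Fintype.card α) := by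
          rw [← mul_assoc, card_rootedForest_insert hx, mul_assoc]
      _ = (#P + 1) * (#P * Fintype.card α ^ (q + 1)) := by rw [ih']; ring

end Counting

section PathDecomposition

variable {α : Type*} {f h : α → α} {P : Set α} {x : α} {d : ℕ}

lemma injective_iterate_of_hitTime_eq (hx : ∃ m, f^[m] x ∈ P) (hd : hitTime f P x = d) :
    Injective fun i : Fin (d + 1) => f^[i] x :=
  fun i j hij => Fin.ext <| iterate_injOn_hitTime hx (by simp only [Set.mem_Iic]; omega)
    (by simp only [Set.mem_Iic]; omega) hij

lemma isRootedForest_extend_self {ι : Type*} {w : ι → α} (hw : Injective w)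
    (hf : ∀ x, ∃ m, f^[m] x ∈ Set.range w) : IsRootedForest (Set.range w) (extend w w f) where
  map_root := by rintro _ ⟨i, rfl⟩; exact hw.extend_apply ..
  exists_iterate_mem x :=
    exists_iterate_mem_of_eqOn_compl (fun _ hy => (extend_apply' _ _ _ hy).symm) (hf x)

/-- Glues the path `w 0 → w 1 → ⋯ → w d` onto the forest `h` whose roots are its vertices:
the result is a tree rooted at `w d`. -/
noncomputable def attachPath (w : Fin (d + 1) ↪ α) (h : α → α) : α → α :=
  extend w (fun i => w ⟨min (i + 1) d, by omega⟩) h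

section
variable {w : Fin (d + 1) ↪ α}

lemma attachPath_apply (i : Fin (d + 1)) :
    attachPath w h (w i) = w ⟨min (i + 1) d, by omega⟩ :=
  w.injective.extend_apply ..

lemma attachPath_of_notMem (hx : x ∉ Set.range w) : attachPath w h x = h x :=
  extend_apply' _ _ _ hx

lemma iterate_attachPath_apply (i : Fin (d + 1)) (m : ℕ) :
    (attachPath w h)^[m] (w i) = w ⟨min (i + m) d, by omega⟩ := by
  induction m with
  | zero => exact congrArg w (Fin.ext (by simp; omega))
  | succ m ih =>
    rw [iterate_succ_apply', ih, attachPath_apply]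
    exact congrArg w (Fin.ext (by simp; omega))

lemma isRootedForest_attachPath (hh : IsRootedForest (Set.range w) h) :
    IsRootedForest {w (Fin.last d)} (attachPath w h) where
  map_root x hx := by
    rw [Set.mem_singleton_iff.1 hx, attachPath_apply]; congr; simp
  exists_iterate_mem x := by
    have hfh : ∀ y ∉ Set.range w, h y = attachPath w h y :=
      fun y hy => (attachPath_of_notMem hy).symm
    obtain ⟨i, hi⟩ := hitPoint_mem (hh.exists_iterate_mem x)
    refine ⟨d + hitTime h (Set.range w) x, ?_⟩
    rw [iterate_add_apply, iterate_hitTime_eq_of_eqOn_compl hfh, ← hi,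
      iterate_attachPath_apply]
    exact congrArg w (Fin.ext (by simp))

lemma hitTime_attachPath : hitTime (attachPath w h) {w (Fin.last d)} (w 0) = d := by
  refine hitTime_eq ?_ fun m hm => ?_
  · rw [iterate_attachPath_apply]; exact congrArg w (Fin.ext (by simp))
  · rw [iterate_attachPath_apply, Set.mem_singleton_iff, w.apply_eq_iff_eq, Fin.ext_iff]
    simp only [Fin.val_last, Fin.val_zero]; omega

lemma attachPath_eq (hpath : ∀ i : Fin (d + 1), f (w i) = w ⟨min (i + 1) d, by omega⟩)
    (hoff : ∀ x ∉ Set.range w, h x = f x) : attachPath w h = f := by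
  funext x
  by_cases hx : x ∈ Set.range w
  · obtain ⟨i, rfl⟩ := hx; rw [attachPath_apply, hpath]
  · rw [attachPath_of_notMem hx, hoff x hx]

end

section
variable {r v : α}

lemma iterate_eq_of_hitTime_eq (hf : IsRootedForest {r} f) (hv : hitTime f {r} v = d) :
    f^[d] v = r :=
  hv ▸ hitPoint_mem (hf.exists_iterate_mem v)

def ancestorPath (hf : IsRootedForest {r} f) (hv : hitTime f {r} v = d) : Fin (d + 1) ↪ α :=
  ⟨fun i => f^[i] v, injective_iterate_of_hitTime_eq (hf.exists_iterate_mem v) hv⟩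

@[simp]
lemma ancestorPath_apply (hf : IsRootedForest {r} f) (hv : hitTime f {r} v = d)
    (i : Fin (d + 1)) : ancestorPath hf hv i = f^[i] v :=
  rfl

lemma exists_iterate_mem_range_ancestorPath (hf : IsRootedForest {r} f)
    (hv : hitTime f {r} v = d) (x : α) : ∃ m, f^[m] x ∈ Set.range (ancestorPath hf hv) := by
  obtain ⟨m, hm⟩ := hf.exists_iterate_mem x
  exact ⟨m, Fin.last d, by simpa [iterate_eq_of_hitTime_eq hf hv] using hm.symm⟩

lemma attachPath_extend_ancestorPath (hf : IsRootedForest {r} f) (hv : hitTime f {r} v = d) :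
    attachPath (ancestorPath hf hv) (extend (ancestorPath hf hv) (ancestorPath hf hv) f) = f := by
  refine attachPath_eq (fun i => ?_) fun x hx => extend_apply' _ _ _ hx
  simp only [ancestorPath_apply, ← iterate_succ_apply' f]
  rcases (Nat.lt_succ_iff.1 i.2).lt_or_eq with hi | hi
  · rw [min_eq_left hi]
  · rw [min_eq_right (by omega), hi, iterate_succ_apply', iterate_eq_of_hitTime_eq hf hv,
      hf.map_root r rfl]

end

/-- A tree rooted at `r` with a vertex `v` at depth `d` is the path `v → ⋯ → r` of its ancestors
together with a forest whose roots are the vertices of that path. -/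
noncomputable def pathForestEquiv (d : ℕ) :
    {q : (α → α) × α × α // IsRootedForest {q.2.1} q.1 ∧ hitTime q.1 {q.2.1} q.2.2 = d} ≃
      {p : (Fin (d + 1) ↪ α) × (α → α) // IsRootedForest (Set.range p.1) p.2} where
  toFun q := ⟨(ancestorPath q.2.1 q.2.2,
      extend (ancestorPath q.2.1 q.2.2) (ancestorPath q.2.1 q.2.2) q.1.1),
    isRootedForest_extend_self (ancestorPath q.2.1 q.2.2).injective
      (exists_iterate_mem_range_ancestorPath q.2.1 q.2.2)⟩
  invFun p := ⟨(attachPath p.1.1 p.1.2, p.1.1 (Fin.last d), p.1.1 0),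
    isRootedForest_attachPath p.2, hitTime_attachPath⟩
  left_inv := by
    rintro ⟨⟨f, r, v⟩, hf, hv⟩
    ext1
    simp only [attachPath_extend_ancestorPath, ancestorPath_apply, Fin.val_last,
      iterate_eq_of_hitTime_eq hf hv, Fin.val_zero, iterate_zero_apply]
  right_inv := by
    rintro ⟨⟨w, h⟩, hh⟩
    have hw : ancestorPath (isRootedForest_attachPath hh) hitTime_attachPath = w :=
      DFunLike.ext _ _ fun i => by
        rw [ancestorPath_apply, iterate_attachPath_apply]
        exact congrArg w (Fin.ext (by simp; omega))
    ext1
    simp only [hw, Prod.mk.injEq, true_and]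
    funext x
    by_cases hx : x ∈ Set.range w
    · obtain ⟨i, rfl⟩ := hx
      exact w.injective.extend_apply _ _ i |>.trans (hh.map_root _ ⟨i, rfl⟩).symm
    · rw [extend_apply' _ _ _ hx, attachPath_of_notMem hx]

lemma card_pathForest_mul [Fintype α] [DecidableEq α] (d : ℕ) :
    Nat.card {p : (Fin (d + 1) ↪ α) × (α → α) // IsRootedForest (Set.range p.1) p.2} *
        Fintype.card α =
      (Fintype.card α).descFactorial (d + 1) *
        ((d + 1) * Fintype.card α ^ (Fintype.card α - (d + 1))) := by
  have hforest : ∀ w : Fin (d + 1) ↪ α,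
      Nat.card (RootedForest (Set.range w)) * Fintype.card α =
        (d + 1) * Fintype.card α ^ (Fintype.card α - (d + 1)) := fun w => by
    simpa using card_rootedForest_mul (univ.map w)
  rw [Nat.card_congr (Equiv.subtypeProdEquivSigmaSubtype
      fun (w : Fin (d + 1) ↪ α) (h : α → α) => IsRootedForest (Set.range w) h),
    Nat.card_sigma, sum_mul, Fintype.sum_congr _ _ hforest, sum_const, card_univ,
    Fintype.card_embedding_eq, Fintype.card_fin, smul_eq_mul]

end PathDecomposition

namespace SimpleGraph

variable {V : Type*} {G : SimpleGraph V} {r : V} {d : V → ℕ}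

lemma Walk.le_add_length (hd : ∀ a b, G.Adj a b → d a ≤ d b + 1) {a b : V} (p : G.Walk a b) :
    d a ≤ d b + p.length := by
  induction p with
  | nil => simp
  | cons h p ih => rw [Walk.length_cons]; have := hd _ _ h; omega

lemma exists_walk_length_le (hdesc : ∀ x ≠ r, ∃ y, G.Adj x y ∧ d y + 1 = d x) (x : V) :
    ∃ p : G.Walk x r, p.length ≤ d x := by
  induction hx : d x generalizing x with
  | zero =>
    by_cases hxr : x = r
    · exact hxr ▸ ⟨.nil, le_rfl⟩
    · obtain ⟨y, -, hy⟩ := hdesc x hxr; omega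
  | succ n ih =>
    by_cases hxr : x = r
    · exact hxr ▸ ⟨.nil, Nat.zero_le _⟩
    obtain ⟨y, hxy, hy⟩ := hdesc x hxr
    obtain ⟨p, hp⟩ := ih y (by omega)
    exact ⟨.cons hxy p, by rw [Walk.length_cons]; omega⟩

lemma dist_eq_of_forall_adj (hr : d r = 0) (hd : ∀ a b, G.Adj a b → d a ≤ d b + 1)
    (hdesc : ∀ x ≠ r, ∃ y, G.Adj x y ∧ d y + 1 = d x) (x : V) : G.dist x r = d x := by
  obtain ⟨p, hp⟩ := exists_walk_length_le hdesc x
  obtain ⟨q, hq⟩ := p.reachable.exists_walk_length_eq_dist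
  have := q.le_add_length hd
  have := dist_le p
  omega

lemma Connected.exists_adj_dist_lt (hG : G.Connected) {x : V} (hx : x ≠ r) :
    ∃ y, G.Adj x y ∧ G.dist y r < G.dist x r := by
  obtain ⟨p, hp⟩ := hG.exists_walk_length_eq_dist x r
  cases p with
  | nil => exact absurd rfl hx
  | cons hxy q =>
    refine ⟨_, hxy, ?_⟩
    have := dist_le q
    rw [Walk.length_cons] at hp
    omega

end SimpleGraph

section ParentGraph

open SimpleGraph

variable {α : Type*} {f g : α → α} {r : α}

def parentGraph (f : α → α) : SimpleGraph α := SimpleGraph.fromRel fun a b => f a = b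

lemma parentGraph_adj {a b : α} : (parentGraph f).Adj a b ↔ a ≠ b ∧ (f a = b ∨ f b = a) :=
  fromRel_adj ..

namespace IsRootedForest

variable (hf : IsRootedForest {r} f)
include hf

lemma adj_apply {x : α} (hx : x ≠ r) : (parentGraph f).Adj x (f x) :=
  parentGraph_adj.2 ⟨(apply_ne_self_of_notMem (P := {r}) hx (hf.exists_iterate_mem x)).symm,
    .inl rfl⟩

lemma hitTime_apply_of_ne {x : α} (hx : x ≠ r) : hitTime f {r} x = hitTime f {r} (f x) + 1 :=
  _root_.hitTime_apply (P := {r}) hx (hf.exists_iterate_mem x)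

lemma exists_adj_hitTime_add_one {x : α} (hx : x ≠ r) :
    ∃ y, (parentGraph f).Adj x y ∧ hitTime f {r} y + 1 = hitTime f {r} x :=
  ⟨f x, hf.adj_apply hx, (hf.hitTime_apply_of_ne hx).symm⟩

lemma dist_parentGraph (x : α) : (parentGraph f).dist x r = hitTime f {r} x := by
  refine dist_eq_of_forall_adj (hitTime_of_mem (P := {r}) rfl) (fun a b hab => ?_)
    (fun _ => hf.exists_adj_hitTime_add_one) x
  obtain ⟨hne, rfl | rfl⟩ := parentGraph_adj.1 hab
  · rw [hf.hitTime_apply_of_ne fun h => hne (by rw [h, hf.map_root r rfl])]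
  · rw [hf.hitTime_apply_of_ne (x := b) fun h => hne (by rw [h, hf.map_root r rfl])]; omega

lemma connected_parentGraph : (parentGraph f).Connected := by
  have hreach : ∀ x, (parentGraph f).Reachable x r := fun x =>
    (exists_walk_length_le (fun _ => hf.exists_adj_hitTime_add_one) x).elim fun p _ => p.reachable
  have : Nonempty α := ⟨r⟩
  exact ⟨fun a b => (hreach a).trans (hreach b).symm⟩

lemma isTree_parentGraph [Finite α] : (parentGraph f).IsTree := by
  classical
  refine isTree_iff_connected_and_card.2 ⟨hf.connected_parentGraph, ?_⟩
  have hedge : Nat.card {x // ¬x = r} = Nat.card (parentGraph f).edgeSet := by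
    refine Nat.card_eq_of_bijective (fun x => ⟨s(x.1, f x.1), hf.adj_apply x.2⟩) ⟨?_, ?_⟩
    · rintro ⟨x, hx⟩ ⟨y, hy⟩ hxy
      rcases Sym2.eq_iff.1 (congrArg Subtype.val hxy) with ⟨rfl, -⟩ | ⟨rfl, hfx⟩
      · rfl
      -- `y → f y → y` would be a cycle avoiding the root
      have hper : IsPeriodicPt f 2 y := by
        rw [IsPeriodicPt, IsFixedPt, iterate_succ_apply', iterate_one, hfx]
      obtain ⟨m, hm⟩ := hf.exists_iterate_mem y
      refine absurd hm (notMem_of_isPeriodicPt hper two_pos (fun j hj => ?_) m)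
      interval_cases j
      · exact hy
      · exact hx
    · rintro ⟨e, he⟩
      induction e using Sym2.ind with
      | _ a b =>
      obtain ⟨hne, hab | hab⟩ := parentGraph_adj.1 he
      · exact ⟨⟨a, fun h => hne (by rw [← hab, h, hf.map_root r rfl])⟩, by simp [hab]⟩
      · exact ⟨⟨b, fun h => hne (by rw [← hab, h, hf.map_root r rfl])⟩,
          Subtype.ext (by simp [hab, Sym2.eq_swap])⟩
  have hsplit := Nat.card_congr (Equiv.sumCompl (· = r))
  rw [Nat.card_sum, Nat.card_unique] at hsplit
  omega

lemma eq_of_parentGraph_eq (hg : IsRootedForest {r} g) (h : parentGraph f = parentGraph g) :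
    f = g := by
  funext x
  by_cases hx : x = r
  · rw [hx, hf.map_root r rfl, hg.map_root r rfl]
  have hadj := hf.adj_apply hx
  rw [h, parentGraph_adj] at hadj
  refine hadj.2.elim Eq.symm fun hgfx => ?_
  -- otherwise `x` and `f x` would each be the parent of the other, so each would be deeper
  have hfx : f x ≠ r := fun h' => hx (by rw [← hgfx, h', hg.map_root r rfl])
  have e1 := hf.dist_parentGraph x
  have e2 := hf.dist_parentGraph (f x)
  rw [h] at e1 e2
  have e3 := hg.dist_parentGraph x
  have e4 := hg.dist_parentGraph (f x)
  have e5 := hf.hitTime_apply_of_ne hx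
  have e6 := hg.hitTime_apply_of_ne hfx
  rw [hgfx] at e6
  omega

end IsRootedForest

lemma SimpleGraph.IsTree.exists_parentGraph_eq {G : SimpleGraph α} (hG : G.IsTree) (r : α) :
    ∃ f, IsRootedForest {r} f ∧ parentGraph f = G := by
  have hparent : ∀ x, ∃ y, (x = r → y = r) ∧ (x ≠ r → G.Adj x y ∧ G.dist y r < G.dist x r) :=
    fun x => by
      by_cases hx : x = r
      · exact ⟨r, fun _ => rfl, fun h => absurd hx h⟩
      · obtain ⟨y, hy⟩ := hG.connected.exists_adj_dist_lt hx
        exact ⟨y, fun h => absurd h hx, fun _ => hy⟩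
  choose f hroot hpar using hparent
  have hf : IsRootedForest {r} f := by
    refine ⟨fun x hx => (hroot x hx).trans hx.symm, fun x => ?_⟩
    induction hd : G.dist x r using Nat.strong_induction_on generalizing x with
    | _ n ih =>
      by_cases hx : x = r
      · exact ⟨0, hx⟩
      obtain ⟨m, hm⟩ := ih _ (hd ▸ (hpar x hx).2) (f x) rfl
      exact ⟨m + 1, by rwa [iterate_succ_apply]⟩
  have hle : parentGraph f ≤ G := fun a b hab => by
    obtain ⟨hne, rfl | rfl⟩ := parentGraph_adj.1 hab
    · exact (hpar a fun h => hne (by rw [h, hroot r rfl])).1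
    · exact (hpar b fun h => hne (by rw [h, hroot r rfl])).1.symm
  exact ⟨f, hf,
    le_antisymm hle ((isTree_iff_minimal_connected.1 hG).2 hf.connected_parentGraph hle)⟩

lemma card_isTree_dist_eq [Finite α] (d : ℕ) :
    Nat.card {p : SimpleGraph α × α × α // p.1.IsTree ∧ p.1.dist p.2.1 p.2.2 = d} =
      Nat.card {q : (α → α) × α × α //
        IsRootedForest {q.2.1} q.1 ∧ hitTime q.1 {q.2.1} q.2.2 = d} := by
  refine (Nat.card_eq_of_bijective (fun q => ⟨(parentGraph q.1.1, q.1.2.1, q.1.2.2),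
    q.2.1.isTree_parentGraph, by rw [SimpleGraph.dist_comm, q.2.1.dist_parentGraph, q.2.2]⟩)
    ⟨?_, ?_⟩).symm
  · rintro ⟨⟨f, r, v⟩, hf, _⟩ ⟨⟨g, r', v'⟩, hg, _⟩ h
    simp only [Subtype.mk.injEq, Prod.mk.injEq] at h
    obtain ⟨hfg, rfl, rfl⟩ := h
    obtain rfl := hf.eq_of_parentGraph_eq hg hfg
    rfl
  · rintro ⟨⟨G, r, v⟩, hG, hd⟩
    obtain ⟨f, hf, rfl⟩ := hG.exists_parentGraph_eq r
    exact ⟨⟨(f, r, v), hf, by rw [← hf.dist_parentGraph, SimpleGraph.dist_comm]; exact hd⟩, rfl⟩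

end ParentGraph

theorem stmt_2_general (n k : ℕ) (hk : 1 ≤ k) (hkn : k ≤ n) :
    (Nat.card {p : SimpleGraph (Fin n) × Fin n × Fin n //
        p.1.IsTree ∧ p.1.dist p.2.1 p.2.2 = k - 1} : ℝ) / (n : ℝ) ^ n
      = (k : ℝ) * (n.descFactorial k : ℝ) / (n : ℝ) ^ (k + 1) := by
  obtain ⟨d, rfl⟩ : ∃ d, k = d + 1 := ⟨k - 1, by omega⟩
  have hcount := card_pathForest_mul (α := Fin n) d
  rw [← Nat.card_congr (pathForestEquiv d), ← card_isTree_dist_eq, Fintype.card_fin] at hcount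
  have hn : (n : ℝ) ≠ 0 := by exact_mod_cast (by omega : n ≠ 0)
  have hpow : (n : ℝ) ^ n = n ^ (n - (d + 1)) * n ^ (d + 1) := by
    rw [← pow_add, Nat.sub_add_cancel hkn]
  rw [Nat.add_sub_cancel, div_eq_div_iff (pow_ne_zero _ hn) (pow_ne_zero _ hn), hpow]
  have hcountℝ := congrArg (Nat.cast : ℕ → ℝ) hcount
  push_cast at hcountℝ ⊢
  linear_combination (n : ℝ) ^ (d + 1) * hcountℝ

/-- Let `T` be a uniformly random rooted labelled tree on `n` vertices (there are
`n^{n-1}` of them) and `v` an independent uniform vertex. Then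
`P(dist(r,v) = k-1) = k·(n)_k / n^{k+1}` for `1 ≤ k ≤ n`. Equivalently, the
number of triples `(G, r, v)` with `G` a labelled tree on `{1,…,n}` and
`dist_G(r,v) = k-1`, divided by `n^n`, equals `k·(n)_k / n^{k+1}`. -/
theorem stmt_2 (n k : ℕ) (hn : 1 ≤ n) (hk : 1 ≤ k) (hkn : k ≤ n) :
    (Nat.card {p : SimpleGraph (Fin n) × Fin n × Fin n //
        p.1.IsTree ∧ p.1.dist p.2.1 p.2.2 = k - 1} : ℝ) / (n : ℝ) ^ n
      = (k : ℝ) * (n.descFactorial k : ℝ) / (n : ℝ) ^ (k + 1) :=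
  stmt_2_general n k hk hkn
end

section
/- The total population size N of a Poisson(λ) Galton–Watson branching process (λ ≤ 1, or conditioned on extinction) satisfies P(N = n) = e^{−λn}(λn)^{n−1}/n! for every positive integer n. -/
/-!
Write `S m = X 0 + ⋯ + X (m-1)`. Then `N = n` says that the walk `S m - m` stays nonnegative
for `m < n` and equals `-1` at `m = n`: the first `n` offspring numbers form an *excursion*.
Indexing them by `ZMod n`, cyclic rotations become translations. By the cycle lemma, each
*bridge* (a sequence of length `n` with sum `n - 1`) has exactly one rotation that is an
excursion, and the joint law of `X 0, …, X (n-1)` is rotation invariant, so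
`P(N = n) = P(S n = n - 1) / n`. Since `S n` is Poisson with mean `λn`, this is
`e^{-λn} (λn)^{n-1} / n!`.
-/

open MeasureTheory ProbabilityTheory Finset
open scoped Nat

lemma Nat.sInf_eq_iff_isLeast {s : Set ℕ} {n : ℕ} (hn : n ≠ 0) :
    sInf s = n ↔ IsLeast s n := by
  refine ⟨fun h => ?_, IsLeast.csInf_eq⟩
  have hs : s.Nonempty := Nat.nonempty_of_pos_sInf (by omega)
  exact h ▸ ⟨Nat.sInf_mem hs, fun m hm => Nat.sInf_le hm⟩

lemma ProbabilityTheory.iIndepFun.measure_forall_eq {ι Ω β : Type*} [Fintype ι]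
    {_ : MeasurableSpace Ω} {μ : Measure Ω} [MeasurableSpace β] [MeasurableSingletonClass β]
    {Y : ι → Ω → β} (h : iIndepFun Y μ) (a : ι → β) :
    μ {ω | ∀ i, Y i ω = a i} = ∏ i, μ {ω | Y i ω = a i} := by
  have : {ω | ∀ i, Y i ω = a i} = ⋂ i, Y i ⁻¹' {a i} := by ext; simp
  rw [this, h.meas_iInter fun i => ⟨{a i}, measurableSet_singleton _, rfl⟩]
  rfl

lemma ZMod.sum_range_natCast {M : Type*} [AddCommMonoid M] (n : ℕ) [NeZero n]
    (f : ZMod n → M) : ∑ i ∈ range n, f i = ∑ i, f i :=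
  sum_nbij' (↑) ZMod.val (by simp) (by simp [ZMod.val_lt])
    (fun _ hi => ZMod.val_cast_of_lt (mem_range.1 hi)) (fun j _ => ZMod.natCast_zmod_val j)
    (fun _ _ => rfl)

lemma sum_piAntidiag_inv_prod_factorial {ι : Type*} [Fintype ι] [DecidableEq ι] (k : ℕ) :
    ∑ a ∈ piAntidiag (univ : Finset ι) k, (∏ i, ((a i)! : ℝ))⁻¹ =
      (Fintype.card ι : ℝ) ^ k / k ! := by
  have hpow := sum_pow_eq_sum_piAntidiag (univ : Finset ι) (fun _ => (1 : ℝ)) k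
  simp only [sum_const, card_univ, nsmul_eq_mul, mul_one, one_pow, prod_const_one] at hpow
  rw [hpow, sum_div]
  refine sum_congr rfl fun a ha => ?_
  have hspec := Nat.multinomial_spec univ a
  rw [(mem_piAntidiag.1 ha).1] at hspec
  rw [← hspec]
  push_cast
  have : (∏ i, ((a i)! : ℝ)) ≠ 0 := prod_ne_zero_iff.2 fun i _ => by positivity
  have : (Nat.multinomial univ a : ℝ) ≠ 0 := Nat.cast_ne_zero.2 (Nat.multinomial_pos _ _).ne'
  field_simp

lemma sum_piAntidiag_prod_poisson {ι : Type*} [Fintype ι] [DecidableEq ι] (lam : ℝ) (k : ℕ) :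
    ∑ a ∈ piAntidiag (univ : Finset ι) k, ∏ i, Real.exp (-lam) * lam ^ a i / (a i)! =
      Real.exp (-(lam * Fintype.card ι)) * (lam * Fintype.card ι) ^ k / k ! := by
  have hterm : ∀ a ∈ piAntidiag (univ : Finset ι) k,
      ∏ i, Real.exp (-lam) * lam ^ a i / (a i)! =
        Real.exp (-(lam * Fintype.card ι)) * lam ^ k * (∏ i, ((a i)! : ℝ))⁻¹ := by
    intro a ha
    simp only [div_eq_mul_inv, prod_mul_distrib, prod_const, prod_pow_eq_pow_sum,
      (mem_piAntidiag.1 ha).1, prod_inv_distrib, card_univ, ← Real.exp_nat_mul]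
    ring_nf
  rw [sum_congr rfl hterm, ← mul_sum, sum_piAntidiag_inv_prod_factorial]
  ring

namespace CycleLemma

variable {n : ℕ}

def partialSum (a : ZMod n → ℕ) (m : ℕ) : ℕ := ∑ i ∈ range m, a i

def rotate (r : ZMod n) (a : ZMod n → ℕ) : ZMod n → ℕ := fun i => a (i + r)

def walk (a : ZMod n → ℕ) (m : ℕ) : ℤ := partialSum a m - m

def StaysNonneg (a : ZMod n → ℕ) : Prop := ∀ m < n, 0 ≤ walk a m

instance : DecidablePred (StaysNonneg (n := n)) := fun _ => by
  unfold StaysNonneg; infer_instance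

lemma rotate_rotate (r s : ZMod n) (a : ZMod n → ℕ) :
    rotate r (rotate s a) = rotate (r + s) a := by
  funext i; simp only [rotate, add_assoc]

@[simp] lemma rotate_zero (a : ZMod n → ℕ) : rotate 0 a = a := by
  funext i; simp [rotate]

lemma partialSum_add (a : ZMod n → ℕ) (r m : ℕ) :
    partialSum a (r + m) = partialSum a r + partialSum (rotate r a) m := by
  simp only [partialSum, rotate, sum_range_add, Nat.cast_add, add_comm (r : ZMod n)]

lemma walk_zero (a : ZMod n → ℕ) : walk a 0 = 0 := by simp [walk, partialSum]

lemma walk_rotate (a : ZMod n → ℕ) (r m : ℕ) :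
    walk (rotate r a) m = walk a (r + m) - walk a r := by
  simp only [walk, partialSum_add a r m]
  push_cast
  ring

lemma staysNonneg_iff_partialSum_ne (a : ZMod n → ℕ) :
    StaysNonneg a ↔ ∀ m, 1 ≤ m → m < n → partialSum a m ≠ m - 1 := by
  refine ⟨fun h m hm1 hmn heq => ?_, fun h => ?_⟩
  · have := h m hmn
    simp only [walk] at this
    omega
  -- the walk moves down by at most one per step, so it cannot jump over `-1`
  have key : ∀ m < n, m ≤ partialSum a m := by
    intro m
    induction m with
    | zero => simp
    | succ m ih =>
      intro hmn
      have hne := h (m + 1) (by omega) hmn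
      simp only [partialSum, sum_range_succ] at hne ⊢
      have := ih (by omega)
      simp only [partialSum] at this
      omega
  intro m hmn
  have := key m hmn
  simp only [walk]
  omega

variable [NeZero n]

lemma partialSum_self (a : ZMod n → ℕ) : partialSum a n = ∑ i, a i :=
  ZMod.sum_range_natCast n a

lemma sum_rotate (r : ZMod n) (a : ZMod n → ℕ) : ∑ i, rotate r a i = ∑ i, a i :=
  Fintype.sum_equiv (Equiv.addRight r) _ _ fun _ => rfl

variable (n) in
def bridges : Finset (ZMod n → ℕ) := piAntidiag univ (n - 1)

variable (n) in
def excursions : Finset (ZMod n → ℕ) := {a ∈ bridges n | StaysNonneg a}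

lemma mem_bridges {a : ZMod n → ℕ} : a ∈ bridges n ↔ ∑ i, a i = n - 1 := by
  simp [bridges, mem_piAntidiag]

lemma walk_add_self {a : ZMod n → ℕ} (ha : a ∈ bridges n) (m : ℕ) :
    walk a (m + n) = walk a m - 1 := by
  have hn := NeZero.pos n
  have h := partialSum_add a m n
  rw [partialSum_self, sum_rotate, mem_bridges.1 ha] at h
  simp only [walk, h]
  push_cast [hn]
  ring

lemma eq_zero_of_staysNonneg_rotate {a : ZMod n → ℕ} (ha : a ∈ bridges n)
    (hgood : StaysNonneg a) {r : ZMod n} (hr : StaysNonneg (rotate r a)) : r = 0 := by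
  rw [← ZMod.natCast_zmod_val r] at hr ⊢
  by_contra hr0
  have hpos : 0 < r.val := Nat.pos_of_ne_zero fun h => hr0 (by simp [h])
  have hlt := ZMod.val_lt r
  have h1 := hr (n - r.val) (by omega)
  rw [walk_rotate, show r.val + (n - r.val) = 0 + n by omega, walk_add_self ha, walk_zero] at h1
  have h2 := hgood r.val hlt
  omega

lemma exists_staysNonneg_rotate {a : ZMod n → ℕ} (ha : a ∈ bridges n) :
    ∃ r : ZMod n, StaysNonneg (rotate r a) := by
  -- rotate to the first time at which the walk attains its minimum over one period
  have hex : ∃ m < n, ∀ k < n, walk a m ≤ walk a k := by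
    obtain ⟨m, hm, hmin⟩ :=
      exists_min_image (range n) (walk a) ⟨0, mem_range.2 (NeZero.pos n)⟩
    exact ⟨m, mem_range.1 hm, fun k hk => hmin k (mem_range.2 hk)⟩
  classical
  obtain ⟨hr₀n, hmin⟩ := Nat.find_spec hex
  set r₀ := Nat.find hex
  have hfirst : ∀ j < r₀, walk a r₀ < walk a j := by
    intro j hj
    obtain ⟨k, hk, hkj⟩ := not_forall₂.1 (not_and.1 (Nat.find_min hex hj) (hj.trans hr₀n))
    exact (hmin k hk).trans_lt (not_le.1 hkj)
  refine ⟨r₀, fun m hm => ?_⟩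
  rw [walk_rotate]
  by_cases h : r₀ + m < n
  · linarith [hmin _ h]
  · rw [show r₀ + m = (r₀ + m - n) + n by omega, walk_add_self ha]
    linarith [hfirst (r₀ + m - n) (by omega)]

-- The cycle lemma: every bridge has exactly one cyclic rotation that is an excursion.
theorem sum_bridges_eq_card_smul {M : Type*} [AddCommMonoid M] (w : (ZMod n → ℕ) → M)
    (hw : ∀ r a, w (rotate r a) = w a) :
    ∑ a ∈ bridges n, w a = n • ∑ a ∈ excursions n, w a := by
  have hexc : ∀ {a}, a ∈ excursions n ↔ a ∈ bridges n ∧ StaysNonneg a := mem_filter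
  symm
  calc n • ∑ a ∈ excursions n, w a
      = ∑ p ∈ (univ : Finset (ZMod n)) ×ˢ excursions n, w (rotate p.1 p.2) := by
        simp [sum_product, hw, ZMod.card]
    _ = ∑ a ∈ bridges n, w a := by
      refine sum_nbij (fun p => rotate p.1 p.2) ?_ ?_ ?_ fun _ _ => rfl
      · rintro ⟨r, a⟩ hp
        simpa [mem_bridges, sum_rotate] using (hexc.1 (mem_product.1 hp).2).1
      · rintro ⟨r, a⟩ hp ⟨s, b⟩ hq (hab : rotate r a = rotate s b)
        obtain ⟨ha, ha'⟩ := hexc.1 (mem_product.1 hp).2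
        obtain ⟨-, hb'⟩ := hexc.1 (mem_product.1 hq).2
        have hb : b = rotate (-s + r) a := by
          rw [← rotate_rotate, hab, rotate_rotate, neg_add_cancel, rotate_zero]
        have hrs : -s + r = 0 := eq_zero_of_staysNonneg_rotate ha ha' (hb ▸ hb')
        rw [neg_add_eq_zero] at hrs
        subst hrs
        simp_all
      · intro b hb
        obtain ⟨r, hr⟩ := exists_staysNonneg_rotate hb
        refine ⟨(-r, rotate r b), ?_, ?_⟩
        · simpa [hexc, mem_bridges, sum_rotate] using ⟨mem_bridges.1 hb, hr⟩
        · simp [rotate_rotate]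

lemma sInf_eq_iff_mem_excursions (x : ℕ → ℕ) :
    sInf {m : ℕ | 1 ≤ m ∧ ∑ i ∈ range m, x i = m - 1} = n ↔
      (fun i : ZMod n => x i.val) ∈ excursions n := by
  have hps : ∀ m ≤ n, partialSum (fun i : ZMod n => x i.val) m = ∑ i ∈ range m, x i :=
    fun m hm => sum_congr rfl fun i hi => by
      show x (i : ZMod n).val = x i
      rw [ZMod.val_cast_of_lt ((mem_range.1 hi).trans_le hm)]
  rw [Nat.sInf_eq_iff_isLeast (NeZero.ne n), excursions, mem_filter, mem_bridges,
    staysNonneg_iff_partialSum_ne, ← partialSum_self, hps n le_rfl]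
  simp only [IsLeast, lowerBounds, Set.mem_ofPred_eq]
  refine ⟨fun ⟨⟨_, hn⟩, hleast⟩ => ⟨hn, fun m hm1 hmn heq => ?_⟩,
    fun ⟨hn, hfirst⟩ => ⟨⟨NeZero.one_le, hn⟩, fun m ⟨hm1, heq⟩ => ?_⟩⟩
  · rw [hps m hmn.le] at heq
    exact absurd (hleast ⟨hm1, heq⟩) (not_le.2 hmn)
  · by_contra! hmn
    exact hfirst m hm1 hmn (hps m hmn.le ▸ heq)

end CycleLemma

theorem stmt_6_general {Ω : Type*} [MeasurableSpace Ω] (μ : Measure Ω)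
    (lam : ℝ) (hlam0 : 0 < lam)
    (X : ℕ → Ω → ℕ) (hmeas : ∀ i, Measurable (X i))
    (hindep : iIndepFun X μ)
    (hdist : ∀ i k, μ {ω | X i ω = k}
      = ENNReal.ofReal (Real.exp (-lam) * lam ^ k / Nat.factorial k))
    (N : Ω → ℕ)
    (hN : ∀ ω, N ω = sInf {n : ℕ | 1 ≤ n ∧ (∑ i ∈ Finset.range n, X i ω) = n - 1})
    (n : ℕ) (hn : 1 ≤ n) :
    μ {ω | N ω = n}
      = ENNReal.ofReal (Real.exp (-(lam * n)) * (lam * n) ^ (n - 1) / Nat.factorial n) := by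
  have : NeZero n := ⟨by omega⟩
  set p : ℕ → ℝ := fun k => Real.exp (-lam) * lam ^ k / k.factorial
  set T : Ω → ZMod n → ℕ := fun ω i => X i.val ω
  have hT : Measurable T := measurable_pi_lambda _ fun i => hmeas _
  have hfiber : ∀ a, μ (T ⁻¹' {a}) = ENNReal.ofReal (∏ i, p (a i)) := by
    intro a
    have hset : T ⁻¹' {a} = {ω | ∀ i, X i.val ω = a i} := by ext; simp [T, funext_iff]
    rw [hset, (hindep.precomp (ZMod.val_injective n)).measure_forall_eq a,
      ENNReal.ofReal_prod_of_nonneg fun i _ => by positivity]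
    simp only [hdist, p]
  have hevent : {ω | N ω = n} = T ⁻¹' ↑(CycleLemma.excursions n) := by
    ext ω
    simp [hN, CycleLemma.sInf_eq_iff_mem_excursions, T]
  have hcycle := CycleLemma.sum_bridges_eq_card_smul (n := n) (fun a => ∏ i, p (a i))
    fun r a => Fintype.prod_equiv (Equiv.addRight r) _ _ fun _ => by simp [CycleLemma.rotate]
  rw [CycleLemma.bridges, sum_piAntidiag_prod_poisson, ZMod.card, nsmul_eq_mul] at hcycle
  rw [hevent, ← sum_measure_preimage_singleton _ fun a _ => hT (measurableSet_singleton a),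
    sum_congr rfl fun a _ => hfiber a, ← ENNReal.ofReal_sum_of_nonneg fun a _ => by positivity]
  congr 1
  have hn0 : (n : ℝ) ≠ 0 := by positivity
  rw [← Nat.mul_factorial_pred (by omega), Nat.cast_mul, mul_comm (n : ℝ), ← div_div, hcycle,
    mul_div_cancel_left₀ _ hn0]

/-- The total population size `N` of a Poisson(λ) Galton–Watson process with
`0 < λ ≤ 1` satisfies `P(N = n) = e^{-λn}(λn)^{n-1}/n!` for every `n ≥ 1`.
The total progeny is modelled, via the standard queue/random-walk encoding,
as `N = inf{n ≥ 1 : X₁ + ⋯ + Xₙ = n - 1}` where the `Xᵢ` are i.i.d.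
Poisson(λ) offspring numbers. -/
theorem stmt_6 {Ω : Type*} [MeasurableSpace Ω] (μ : Measure Ω) [IsProbabilityMeasure μ]
    (lam : ℝ) (hlam0 : 0 < lam) (hlam1 : lam ≤ 1)
    (X : ℕ → Ω → ℕ) (hmeas : ∀ i, Measurable (X i))
    (hindep : iIndepFun X μ)
    (hdist : ∀ i k, μ {ω | X i ω = k}
      = ENNReal.ofReal (Real.exp (-lam) * lam ^ k / Nat.factorial k))
    (N : Ω → ℕ)
    (hN : ∀ ω, N ω = sInf {n : ℕ | 1 ≤ n ∧ (∑ i ∈ Finset.range n, X i ω) = n - 1})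
    (n : ℕ) (hn : 1 ≤ n) :
    μ {ω | N ω = n}
      = ENNReal.ofReal (Real.exp (-(lam * n)) * (lam * n) ^ (n - 1) / Nat.factorial n) :=
  stmt_6_general μ lam hlam0 X hmeas hindep hdist N hN n hn
end

section
/- For 0 < λ < 1, summing the Borel(λ) probabilities gives ∑_{n=1}^{∞} e^{−λn}(λn)^{n−1}/n! = 1. -/
/-!
Let `T(x) = ∑ n^(n-1)/n! xⁿ` be the tree function; its coefficients are at most `eⁿ`, so it is
analytic on `|x| < e⁻¹`. The Borel sum equals `T(λ e^(-λ)) / λ`, so it suffices that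
`T(t e^(-t)) = t`. For small `t`, expanding every `e^(-nt)` and regrouping by total degree, the
coefficient of `t^m` is `(1/m!) ∑ₙ (-1)^(m-n) (m choose n) n^(m-1)`, an `m`-th forward difference
of a polynomial of degree `m - 1`, hence zero for `m ≥ 2`. Since `t e^(-t) < e⁻¹` for `t ≠ 1`, the
identity extends to `0 ≤ t < 1` by analytic continuation.
-/

open Finset Real Filter Topology FormalMultilinearSeries
open scoped Nat

theorem sum_range_neg_one_pow_mul_choose_mul_pow_eq_zero {R : Type*} [CommRing R] {j n : ℕ}
    (h : j < n) : ∑ k ∈ range (n + 1), (-1 : R) ^ (n - k) * n.choose k * (k : R) ^ j = 0 := by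
  have := congr_fun (fwdDiff_iter_pow_eq_zero_of_lt (R := R) h) 0
  simpa [fwdDiff_iter_eq_sum_shift, zsmul_eq_mul] using this

theorem tsum_tsum_eq_tsum_sum_antidiagonal {E : Type*} [NormedAddCommGroup E] [CompleteSpace E]
    {f : ℕ × ℕ → E} (hf : Summable f) :
    ∑' n, ∑' k, f (n, k) = ∑' m, ∑ p ∈ antidiagonal m, f p := by
  let e := HasAntidiagonal.sigmaAntidiagonalEquivProd (A := ℕ)
  calc ∑' n, ∑' k, f (n, k) = ∑' p, f p := (hf.tsum_prod' hf.prod_factor).symm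
    _ = ∑' x, f (e x) := (e.tsum_eq f).symm
    _ = ∑' m, ∑' p : antidiagonal m, f p := by
        exact Summable.tsum_sigma' (f := f ∘ e) (fun _ => .of_finite) (e.summable_iff.mpr hf)
    _ = ∑' m, ∑ p ∈ antidiagonal m, f p := tsum_congr fun m => tsum_subtype _ f

theorem mul_exp_neg_lt_exp_neg_one {t : ℝ} (ht : t ≠ 1) : t * exp (-t) < exp (-1) := by
  have : t < exp (t - 1) := by linarith [add_one_lt_exp (sub_ne_zero.mpr ht)]
  calc t * exp (-t) < exp (t - 1) * exp (-t) := by gcongr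
    _ = exp (-1) := by rw [← exp_add]; ring_nf

/-- `treeCoeff n = n ^ (n - 1) / n!`; the `0` case is explicit since `0 ^ (0 - 1) = 1`. -/
noncomputable def treeCoeff : ℕ → ℝ
  | 0 => 0
  | n + 1 => ((n : ℝ) + 1) ^ n / (n + 1)!

theorem treeCoeff_nonneg (n : ℕ) : 0 ≤ treeCoeff n := by
  cases n <;> simp only [treeCoeff] <;> positivity

theorem treeCoeff_le_exp_one_pow (n : ℕ) : treeCoeff n ≤ exp 1 ^ n := by
  cases n with
  | zero => simp [treeCoeff]
  | succ n =>
    calc treeCoeff (n + 1) ≤ ((n : ℝ) + 1) ^ (n + 1) / (n + 1)! := by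
          simp only [treeCoeff]
          gcongr
          · linarith [(n.cast_nonneg : (0 : ℝ) ≤ n)]
          · omega
      _ ≤ exp ((n : ℝ) + 1) := pow_div_factorial_le_exp _ (by positivity) _
      _ = exp 1 ^ (n + 1) := by rw [← exp_nat_mul]; push_cast; ring_nf

theorem treeCoeff_mul_neg_pow_div_factorial {n k : ℕ} (h : 2 ≤ n + k) :
    treeCoeff n * (-(n : ℝ)) ^ k / k ! =
      (-1) ^ k * (n + k).choose n * (n : ℝ) ^ (n + k - 1) / (n + k)! := by
  cases n with
  | zero => simp [treeCoeff, zero_pow (by omega : k - 1 ≠ 0)]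
  | succ n =>
    have hfact : ((n + 1 + k).choose (n + 1) : ℝ) * (n + 1)! * k ! = (n + 1 + k)! := by
      have := Nat.choose_mul_factorial_mul_factorial (Nat.le_add_right (n + 1) k)
      rw [Nat.add_sub_cancel_left] at this
      exact_mod_cast this
    have hchoose : ((n + 1 + k).choose (n + 1) : ℝ) ≠ 0 := by
      exact_mod_cast (Nat.choose_pos (by omega)).ne'
    rw [show n + 1 + k - 1 = n + k by omega, neg_pow, pow_add, ← hfact]
    simp only [treeCoeff]
    field_simp
    push_cast
    ring

theorem sum_antidiagonal_treeCoeff_mul_neg_pow_div_factorial (m : ℕ) :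
    ∑ p ∈ antidiagonal m, treeCoeff p.1 * (-(p.1 : ℝ)) ^ p.2 / p.2 ! = if m = 1 then 1 else 0 := by
  match m with
  | 0 => simp [treeCoeff]
  | 1 => simp [treeCoeff, Nat.antidiagonal_succ]
  | m + 2 =>
    calc ∑ p ∈ antidiagonal (m + 2), treeCoeff p.1 * (-(p.1 : ℝ)) ^ p.2 / p.2 !
        = (∑ k ∈ range (m + 2 + 1),
            (-1 : ℝ) ^ (m + 2 - k) * (m + 2).choose k * (k : ℝ) ^ (m + 1)) / (m + 2)! := by
          rw [sum_div, ← Nat.sum_antidiagonal_eq_sum_range_succ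
            (fun i k => (-1 : ℝ) ^ k * (m + 2).choose i * (i : ℝ) ^ (m + 1) / (m + 2)!)]
          refine sum_congr rfl fun p hp => ?_
          rw [HasAntidiagonal.mem_antidiagonal] at hp
          rw [treeCoeff_mul_neg_pow_div_factorial (by omega), hp, show m + 2 - 1 = m + 1 by omega]
      _ = if m + 2 = 1 then 1 else 0 := by
          rw [sum_range_neg_one_pow_mul_choose_mul_pow_eq_zero (by omega), zero_div,
            if_neg (by omega)]

noncomputable def treeFun (x : ℝ) : ℝ := ∑' n, treeCoeff n * x ^ n

theorem treeFun_eq_ofScalarsSum : treeFun = ofScalarsSum treeCoeff := by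
  ext x
  simp [treeFun, ofScalars_sum_eq]

theorem ofReal_exp_neg_one_le_radius_ofScalars_treeCoeff :
    ENNReal.ofReal (exp (-1)) ≤ (ofScalars ℝ treeCoeff).radius := by
  refine le_radius_of_bound _ 1 fun n => ?_
  rw [ofScalars_norm, norm_of_nonneg (treeCoeff_nonneg n),
    Real.coe_toNNReal _ (exp_pos _).le]
  calc treeCoeff n * exp (-1) ^ n ≤ exp 1 ^ n * exp (-1) ^ n := by
        gcongr
        exact treeCoeff_le_exp_one_pow n
    _ = 1 := by rw [← mul_pow, ← exp_add, add_neg_cancel, exp_zero, one_pow]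

theorem mem_eball_radius_ofScalars_treeCoeff {x : ℝ} (hx : |x| < exp (-1)) :
    x ∈ Metric.eball 0 (ofScalars ℝ treeCoeff).radius := by
  refine lt_of_lt_of_le ?_ ofReal_exp_neg_one_le_radius_ofScalars_treeCoeff
  rwa [edist_dist, dist_zero_right, norm_eq_abs, ENNReal.ofReal_lt_ofReal_iff (exp_pos _)]

theorem summable_treeCoeff_mul_pow {x : ℝ} (hx : |x| < exp (-1)) :
    Summable fun n => treeCoeff n * x ^ n := by
  simpa [ofScalars_apply_eq, mul_comm] using (ofScalars ℝ treeCoeff).summable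
    (mem_eball_radius_ofScalars_treeCoeff hx)

theorem analyticAt_treeFun {x : ℝ} (hx : |x| < exp (-1)) : AnalyticAt ℝ treeFun x := by
  have hpos : 0 < (ofScalars ℝ treeCoeff).radius :=
    lt_of_lt_of_le (by simpa using exp_pos (-1)) ofReal_exp_neg_one_le_radius_ofScalars_treeCoeff
  rw [treeFun_eq_ofScalarsSum]
  exact ((ofScalars ℝ treeCoeff).hasFPowerSeriesOnBall hpos).analyticAt_of_mem
    (mem_eball_radius_ofScalars_treeCoeff hx)

/-- The double series obtained from `∑ₙ treeCoeff n (u eˢ)ⁿ` by expanding each `eⁿˢ`. -/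
noncomputable def treeExpTerm (u s : ℝ) (p : ℕ × ℕ) : ℝ :=
  treeCoeff p.1 * u ^ p.1 * (p.1 * s) ^ p.2 / p.2 !

theorem hasSum_treeExpTerm (u s : ℝ) (n : ℕ) :
    HasSum (fun k => treeExpTerm u s (n, k)) (treeCoeff n * (u * exp s) ^ n) := by
  have := (NormedSpace.expSeries_div_hasSum_exp (n * s)).mul_left (treeCoeff n * u ^ n)
  rw [← exp_eq_exp_ℝ, exp_nat_mul] at this
  rw [mul_pow, ← mul_assoc]
  simpa only [treeExpTerm, mul_div_assoc] using this

theorem norm_treeExpTerm (u s : ℝ) (p : ℕ × ℕ) :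
    ‖treeExpTerm u s p‖ = treeExpTerm |u| |s| p := by
  simp [treeExpTerm, abs_of_nonneg (treeCoeff_nonneg _)]

theorem summable_treeExpTerm {u s : ℝ} (h : |u| * exp |s| < exp (-1)) :
    Summable (treeExpTerm u s) := by
  have hnonneg : ∀ p, 0 ≤ treeExpTerm |u| |s| p := fun p => by
    rw [← norm_treeExpTerm]
    exact norm_nonneg _
  refine .of_norm ?_
  simp only [norm_treeExpTerm]
  refine (summable_prod_of_nonneg hnonneg).mpr ⟨fun n => (hasSum_treeExpTerm _ _ n).summable, ?_⟩
  simp only [(hasSum_treeExpTerm _ _ _).tsum_eq]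
  exact summable_treeCoeff_mul_pow (by rwa [abs_of_nonneg (by positivity)])

theorem sum_antidiagonal_treeExpTerm_neg (t : ℝ) (m : ℕ) :
    ∑ p ∈ antidiagonal m, treeExpTerm t (-t) p = t ^ m * if m = 1 then 1 else 0 := by
  rw [← sum_antidiagonal_treeCoeff_mul_neg_pow_div_factorial, mul_sum]
  refine sum_congr rfl fun p hp => ?_
  rw [HasAntidiagonal.mem_antidiagonal] at hp
  rw [treeExpTerm, ← hp, pow_add, mul_neg, ← neg_mul, mul_pow]
  ring

theorem treeFun_mul_exp_neg_of_abs_mul_exp_abs_lt {t : ℝ} (ht : |t| * exp |t| < exp (-1)) :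
    treeFun (t * exp (-t)) = t := by
  calc treeFun (t * exp (-t)) = ∑' n, ∑' k, treeExpTerm t (-t) (n, k) :=
        tsum_congr fun n => (hasSum_treeExpTerm t (-t) n).tsum_eq.symm
    _ = ∑' m, ∑ p ∈ antidiagonal m, treeExpTerm t (-t) p :=
        tsum_tsum_eq_tsum_sum_antidiagonal (summable_treeExpTerm (by rwa [abs_neg]))
    _ = t := by
        simp only [sum_antidiagonal_treeExpTerm_neg, mul_ite, mul_one, mul_zero, tsum_ite_eq,
          pow_one]

theorem treeFun_mul_exp_neg {t : ℝ} (ht0 : 0 ≤ t) (ht1 : t < 1) : treeFun (t * exp (-t)) = t := by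
  have hmaps : ∀ t ∈ Set.Ico (0 : ℝ) 1, |t * exp (-t)| < exp (-1) := fun t ht => by
    rw [abs_of_nonneg (mul_nonneg ht.1 (exp_pos _).le)]
    exact mul_exp_neg_lt_exp_neg_one ht.2.ne
  have hanalytic : AnalyticOnNhd ℝ (fun t => treeFun (t * exp (-t)) - t) (Set.Ico 0 1) :=
    fun t ht => ((analyticAt_treeFun (hmaps t ht)).comp (f := fun t => t * exp (-t))
      (by fun_prop)).sub analyticAt_id
  have hnear : ∀ᶠ t in 𝓝 (0 : ℝ), |t| * exp |t| < exp (-1) :=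
    (by fun_prop : Continuous fun t : ℝ => |t| * exp |t|).continuousAt.eventually_lt
      continuousAt_const (by simpa using exp_pos (-1))
  have := hanalytic.eqOn_zero_of_preconnected_of_eventuallyEq_zero
    (convex_Ico 0 1).isPreconnected (Set.left_mem_Ico.mpr one_pos)
    (hnear.mono fun t ht => sub_eq_zero.mpr (treeFun_mul_exp_neg_of_abs_mul_exp_abs_lt ht))
    ⟨ht0, ht1⟩
  exact sub_eq_zero.mp this

theorem treeCoeff_succ_mul_mul_exp_neg_pow (t : ℝ) (j : ℕ) :
    treeCoeff (j + 1) * (t * exp (-t)) ^ (j + 1) =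
      t * (exp (-(t * (j + 1))) * (t * (j + 1)) ^ j / (j + 1)!) := by
  rw [show -(t * (j + 1)) = (j + 1 : ℕ) * -t by push_cast; ring, exp_nat_mul, treeCoeff]
  simp only [mul_pow]
  ring

/-- For `0 < λ < 1`, the Borel(λ) probabilities sum to one:
`∑_{n=1}^{∞} e^{-λn}(λn)^{n-1}/n! = 1` (the sum is indexed by `n = j+1`, `j : ℕ`). -/
theorem stmt_7 (l : ℝ) (h0 : 0 < l) (h1 : l < 1) :
    ∑' j : ℕ, Real.exp (-(l * (j + 1))) * (l * (j + 1)) ^ j / (Nat.factorial (j + 1)) = 1 := by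
  have hl := treeFun_mul_exp_neg h0.le h1
  rw [treeFun, (summable_treeCoeff_mul_pow _).tsum_eq_zero_add] at hl
  · simp only [treeCoeff.eq_1, zero_mul, zero_add, treeCoeff_succ_mul_mul_exp_neg_pow,
      tsum_mul_left] at hl
    exact mul_left_cancel₀ h0.ne' (hl.trans (mul_one l).symm)
  · rw [abs_of_pos (by positivity)]
    exact mul_exp_neg_lt_exp_neg_one h1.ne
end

section
/- Let X₁, X₂, … be i.i.d. integer-valued random variables with mean μ and maximum value 1 (i.e. Xᵢ ≤ 1 almost surely), and let S_n = X₁+⋯+X_n. Then P(S_n > 0 for all n = 1,2,…) equals μ if μ > 0 and equals 0 if μ ≤ 0. -/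
open MeasureTheory ProbabilityTheory Finset Filter Topology
open scoped ENNReal
open Fin.NatCast

/-!
Cycle lemma: if a sequence of period `n` has increments `≤ 1` and increment `s` over a period,
exactly `s⁺` of its `n` rotations have all partial sums positive. Rotation `j` is good iff the
minimum of the walk over the window `[j, j + n)` increases when the window moves by one; that
minimum moves up by `0` or `1` at each step and by `s` over a period, so the good rotations are
counted by a telescoping sum.

The rotations of an i.i.d. vector `(X₀, …, X_{N-1})` all have its law, so averaging over them gives
`P(S_k > 0 for 1 ≤ k ≤ N) = E[(S_N / N)⁺]`. By the strong law of large numbers and dominated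
convergence (`S_N / N ≤ 1`) the right side tends to `m⁺`, and the left side decreases to the
probability in question.
-/

namespace SkipFreeWalk

variable {S : ℕ → ℤ} {n : ℕ} [NeZero n] {s : ℤ} {j : ℕ}

def windowMin (S : ℕ → ℤ) (n : ℕ) [NeZero n] (j : ℕ) : ℤ :=
  (range n).inf' (nonempty_range_iff.2 (NeZero.ne n)) fun k => S (j + k)

lemma windowMin_le (S : ℕ → ℤ) (j : ℕ) {k : ℕ} (hk : k < n) : windowMin S n j ≤ S (j + k) :=
  inf'_le _ (mem_range.2 hk)

lemma exists_windowMin_eq (S : ℕ → ℤ) (n : ℕ) [NeZero n] (j : ℕ) :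
    ∃ k < n, S (j + k) = windowMin S n j := by
  obtain ⟨k, hk, h⟩ := exists_mem_eq_inf' (nonempty_range_iff.2 (NeZero.ne n))
    fun k => S (j + k)
  exact ⟨k, mem_range.1 hk, h.symm⟩

lemma windowMin_add_period (hper : ∀ m, S (m + n) = S m + s) :
    windowMin S n (j + n) = windowMin S n j + s := by
  obtain ⟨k, hk, hmin⟩ := exists_windowMin_eq S n j
  obtain ⟨k', hk', hmin'⟩ := exists_windowMin_eq S n (j + n)
  have h₁ := windowMin_le S (j + n) hk
  have h₂ := windowMin_le S j hk'
  rw [add_right_comm, hper] at h₁ hmin'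
  omega

lemma windowMin_le_windowMin_succ (hs : 0 ≤ s) (hper : ∀ m, S (m + n) = S m + s) :
    windowMin S n j ≤ windowMin S n (j + 1) := by
  obtain ⟨k, hk, hmin⟩ := exists_windowMin_eq S n (j + 1)
  rw [add_assoc, add_comm 1] at hmin
  rcases (Nat.add_one_le_of_lt hk).lt_or_eq with hk' | hk'
  · exact (windowMin_le S j hk').trans hmin.le
  · have := windowMin_le S j (NeZero.pos n)
    rw [hk', hper] at hmin
    rw [add_zero] at this
    omega

lemma windowMin_succ_le (hskip : ∀ m, S (m + 1) ≤ S m + 1) :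
    windowMin S n (j + 1) ≤ windowMin S n j + 1 := by
  obtain ⟨_ | k, hk, hmin⟩ := exists_windowMin_eq S n j
  · have := windowMin_le S (j + 1) (NeZero.pos n)
    simp only [add_zero] at this hmin
    have := hskip j
    omega
  · have := windowMin_le S (j + 1) (Nat.lt_of_succ_lt hk)
    rw [add_right_comm] at this
    rw [← add_assoc] at hmin
    omega

lemma lt_windowMin_succ_iff :
    S j < windowMin S n (j + 1) ↔ windowMin S n j < windowMin S n (j + 1) := by
  refine ⟨(windowMin_le S j (NeZero.pos n)).trans_lt, fun h => ?_⟩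
  obtain ⟨_ | k, hk, hmin⟩ := exists_windowMin_eq S n j
  · rw [add_zero] at hmin
    rwa [hmin]
  · have := windowMin_le S (j + 1) (Nat.lt_of_succ_lt hk)
    rw [add_right_comm] at this
    rw [← add_assoc] at hmin
    omega

lemma lt_windowMin_succ_iff_forall :
    S j < windowMin S n (j + 1) ↔ ∀ k ∈ Icc 1 n, S j < S (j + k) := by
  simp only [windowMin, lt_inf'_iff, mem_range, mem_Icc]
  constructor
  · rintro h (_ | k) ⟨hk, hkn⟩
    · omega
    · simpa only [add_right_comm, add_assoc] using h k hkn
  · intro h k hk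
    simpa only [add_right_comm, add_assoc] using h (k + 1) ⟨le_add_self, hk⟩

theorem card_filter_forall_lt (hskip : ∀ m, S (m + 1) ≤ S m + 1)
    (hper : ∀ m, S (m + n) = S m + s) :
    #{j ∈ range n | ∀ k ∈ Icc (1 : ℕ) n, S j < S (j + k)} = s.toNat := by
  simp only [← lt_windowMin_succ_iff_forall]
  rcases lt_or_ge 0 s with hs | hs
  · have hstep (j : ℕ) : (if S j < windowMin S n (j + 1) then 1 else 0 : ℤ) =
        windowMin S n (j + 1) - windowMin S n j := by
      have := windowMin_le_windowMin_succ (j := j) hs.le hper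
      have := windowMin_succ_le (n := n) (j := j) hskip
      split_ifs with h <;> rw [lt_windowMin_succ_iff] at h <;> omega
    have hperiod := windowMin_add_period (j := 0) hper
    rw [zero_add] at hperiod
    zify
    rw [natCast_card_filter, sum_congr rfl fun j _ => hstep j, sum_range_sub, hperiod,
      Int.toNat_of_nonneg hs.le]
    ring
  · rw [Int.toNat_of_nonpos hs, card_eq_zero, filter_eq_empty_iff]
    intro j _ h
    have := windowMin_le S (j + 1) (Nat.sub_one_lt (NeZero.ne n))
    rw [add_assoc, Nat.add_sub_cancel' NeZero.one_le, hper] at this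
    omega

end SkipFreeWalk

def ballotSet (N : ℕ) [NeZero N] : Set (Fin N → ℤ) :=
  {y | ∀ k ∈ Icc 1 N, 0 < ∑ i ∈ range k, y i}

lemma mem_ballotSet_iff {N : ℕ} [NeZero N] (x : ℕ → ℤ) :
    (fun i : Fin N => x i) ∈ ballotSet N ↔ ∀ k ∈ Icc 1 N, 0 < ∑ i ∈ range k, x i := by
  refine forall₂_congr fun k hk => ?_
  rw [sum_congr rfl fun i hi => ?_]
  dsimp only
  rw [Fin.val_natCast, Nat.mod_eq_of_lt ((mem_range.1 hi).trans_le (mem_Icc.1 hk).2)]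

open Classical in
theorem card_shift_mem_ballotSet {N : ℕ} [NeZero N] (y : Fin N → ℤ) (hy : ∀ i, y i ≤ 1) :
    #{j : Fin N | (fun i => y (i + j)) ∈ ballotSet N} = (∑ i, y i).toNat := by
  set S : ℕ → ℤ := fun m => ∑ i ∈ range m, y i
  have hshift (m k : ℕ) : S (m + k) = S m + ∑ i ∈ range k, y (i + m) := by
    simp only [S, sum_range_add, Nat.cast_add, add_comm (m : Fin N)]
  have hper (m : ℕ) : S (m + N) = S m + ∑ i, y i := by
    simp only [hshift, ← Fin.sum_univ_eq_sum_range (fun i => y (i + m)), Fin.cast_val_eq_self]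
    exact congrArg _ (Equiv.sum_comp (Equiv.addRight (m : Fin N)) y)
  have hskip (m : ℕ) : S (m + 1) ≤ S m + 1 := by
    simpa [hshift] using hy m
  rw [← SkipFreeWalk.card_filter_forall_lt hskip hper, card_filter, card_filter,
    ← Fin.sum_univ_eq_sum_range]
  refine sum_congr rfl fun j _ => if_congr ?_ rfl rfl
  simp only [ballotSet, Set.mem_ofPred_eq, hshift, Fin.cast_val_eq_self, lt_add_iff_pos_right]

lemma ENNReal.natCast_toNat_eq_ofReal (s : ℤ) : ((s.toNat : ℕ) : ℝ≥0∞) = ENNReal.ofReal s := by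
  rcases le_total 0 s with h | h
  · rw [← ENNReal.ofReal_natCast]
    congr 1
    exact_mod_cast Int.toNat_of_nonneg h
  · simp [Int.toNat_of_nonpos h, ENNReal.ofReal_of_nonpos (Int.cast_nonpos.2 h)]

section Probability

variable {Ω : Type*} [MeasurableSpace Ω] {μ : Measure Ω}

theorem natCast_mul_measure_preimage_ballotSet {N : ℕ} [NeZero N] {Y : Ω → Fin N → ℤ}
    (hY : Measurable Y) (hshift : ∀ j : Fin N, μ.map (fun ω i => Y ω (i + j)) = μ.map Y)
    (hle : ∀ᵐ ω ∂μ, ∀ i, Y ω i ≤ 1) :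
    N * μ (Y ⁻¹' ballotSet N) = ∫⁻ ω, ((∑ i, Y ω i).toNat : ℝ≥0∞) ∂μ := by
  classical
  have hshift_meas (j : Fin N) : Measurable fun ω i => Y ω (i + j) := by fun_prop
  have hpre (j : Fin N) :
      μ ((fun ω i => Y ω (i + j)) ⁻¹' ballotSet N) = μ (Y ⁻¹' ballotSet N) := by
    rw [← Measure.map_apply (hshift_meas j) .of_discrete, hshift,
      Measure.map_apply hY .of_discrete]
  calc (N : ℝ≥0∞) * μ (Y ⁻¹' ballotSet N)
      = ∑ j : Fin N, μ ((fun ω i => Y ω (i + j)) ⁻¹' ballotSet N) := by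
        simp [hpre]
    _ = ∫⁻ ω, ∑ j : Fin N, ((fun ω i => Y ω (i + j)) ⁻¹' ballotSet N).indicator 1 ω ∂μ := by
        rw [lintegral_finsetSum _ fun j _ =>
          measurable_one.indicator (hshift_meas j .of_discrete)]
        simp_rw [lintegral_indicator_one (hshift_meas _ .of_discrete)]
    _ = ∫⁻ ω, (#{j : Fin N | (fun i => Y ω (i + j)) ∈ ballotSet N} : ℝ≥0∞) ∂μ := by
        simp [Set.indicator_apply]
    _ = ∫⁻ ω, ((∑ i, Y ω i).toNat : ℝ≥0∞) ∂μ :=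
        lintegral_congr_ae <| hle.mono fun ω hω => by
          dsimp only
          rw [card_shift_mem_ballotSet _ hω]

theorem map_comp_perm_eq_of_iIndepFun {ι β : Type*} [Fintype ι] [MeasurableSpace β]
    {X : ι → Ω → β} (hX : ∀ i, AEMeasurable (X i) μ) (hindep : iIndepFun X μ)
    (hident : ∀ i j, IdentDistrib (X i) (X j) μ μ) (σ : Equiv.Perm ι) :
    μ.map (fun ω i => X (σ i) ω) = μ.map (fun ω i => X i ω) := by
  have := hindep.isProbabilityMeasure
  have hpi : μ.map (fun ω i => X i ω) = Measure.pi fun i => μ.map (X (σ.symm i)) := by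
    rw [hindep.map_fun_eq_pi_map hX]
    exact congrArg _ (funext fun i => (hident i _).map_eq)
  have hcomp : (fun ω i => X (σ i) ω) =
      MeasurableEquiv.piCongrLeft (fun _ => β) σ.symm ∘ fun ω i => X i ω := by
    ext ω i
    simp [MeasurableEquiv.coe_piCongrLeft, Equiv.piCongrLeft_apply]
  rw [hcomp, ← AEMeasurable.map_map_of_aemeasurable (by fun_prop) (aemeasurable_pi_lambda _ hX),
    hpi, (measurePreserving_piCongrLeft (fun i => μ.map (X i)) σ.symm).map_eq,
    ← hpi, hindep.map_fun_eq_pi_map hX]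

theorem measure_ballot_eq_lintegral_of_iid {X : ℕ → Ω → ℤ}
    (hmeas : ∀ i, Measurable (X i)) (hindep : iIndepFun X μ)
    (hident : ∀ i, IdentDistrib (X i) (X 0) μ μ) (hle : ∀ i, ∀ᵐ ω ∂μ, X i ω ≤ 1) {N : ℕ}
    (hN : N ≠ 0) :
    μ {ω | ∀ k ∈ Icc 1 N, 0 < ∑ i ∈ range k, X i ω} =
      ∫⁻ ω, ENNReal.ofReal ((∑ i ∈ range N, (X i ω : ℝ)) / N) ∂μ := by
  have : NeZero N := ⟨hN⟩
  set Y : Ω → Fin N → ℤ := fun ω i => X i ω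
  have hexch (j : Fin N) : μ.map (fun ω i => Y ω (i + j)) = μ.map Y :=
    map_comp_perm_eq_of_iIndepFun (X := fun i : Fin N => X i) (fun i => (hmeas i).aemeasurable)
      (hindep.precomp Fin.val_injective) (fun i j => (hident i).trans (hident j).symm)
      (Equiv.addRight j)
  have hballot := natCast_mul_measure_preimage_ballotSet
    (measurable_pi_lambda _ fun i => hmeas i) hexch ((ae_all_iff.2 hle).mono fun ω h i => h i)
  have hevent : {ω | ∀ k ∈ Icc 1 N, 0 < ∑ i ∈ range k, X i ω} = Y ⁻¹' ballotSet N := by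
    ext ω
    exact (mem_ballotSet_iff (X · ω)).symm
  have hN' : (N : ℝ≥0∞) ≠ 0 := Nat.cast_ne_zero.2 hN
  have hpos : (0 : ℝ) < N := Nat.cast_pos.2 (Nat.pos_of_ne_zero hN)
  have hintegrand (ω : Ω) : ENNReal.ofReal ((∑ i ∈ range N, (X i ω : ℝ)) / N) =
      (N : ℝ≥0∞)⁻¹ * ((∑ i, Y ω i).toNat : ℝ≥0∞) := by
    rw [ENNReal.natCast_toNat_eq_ofReal, Fin.sum_univ_eq_sum_range (X · ω),
      ENNReal.ofReal_div_of_pos hpos, ENNReal.ofReal_natCast, ENNReal.div_eq_inv_mul]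
    push_cast
    rfl
  rw [hevent, lintegral_congr hintegrand, lintegral_const_mul' _ _ (ENNReal.inv_ne_top.2 hN'),
    ← hballot, ← mul_assoc, ENNReal.inv_mul_cancel hN' (ENNReal.natCast_ne_top N), one_mul]

theorem tendsto_lintegral_ofReal_sum_div [IsProbabilityMeasure μ] {X : ℕ → Ω → ℝ}
    (hint : Integrable (X 0) μ) (hindep : Pairwise (Function.onFun (· ⟂ᵢ[μ] ·) X))
    (hident : ∀ i, IdentDistrib (X i) (X 0) μ μ) {c : ℝ} (hle : ∀ i, ∀ᵐ ω ∂μ, X i ω ≤ c) :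
    Tendsto (fun N : ℕ => ∫⁻ ω, ENNReal.ofReal ((∑ i ∈ range N, X i ω) / N) ∂μ) atTop
      (𝓝 (ENNReal.ofReal μ[X 0])) := by
  have hX (i : ℕ) : AEMeasurable (X i) μ := (hident i).aemeasurable_fst
  have hbound (N : ℕ) :
      ∀ᵐ ω ∂μ, ENNReal.ofReal ((∑ i ∈ range N, X i ω) / N) ≤ ENNReal.ofReal c := by
    filter_upwards [ae_all_iff.2 hle] with ω hω
    rcases N.eq_zero_or_pos with rfl | hN
    · simp
    refine ENNReal.ofReal_le_ofReal ((div_le_iff₀ (Nat.cast_pos.2 hN)).2 ?_)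
    simpa [mul_comm] using sum_le_card_nsmul (range N) (X · ω) c fun i _ => hω i
  simpa using tendsto_lintegral_of_dominated_convergence' (fun _ => ENNReal.ofReal c)
    (fun N => by fun_prop) hbound (by simp)
    ((strong_law_ae_real X hint hindep hident).mono fun ω h => ENNReal.tendsto_ofReal h)

end Probability

/-- Stationary ballot theorem (Takács): if `X₁, X₂, …` are i.i.d. integer-valued
random variables with mean `m` and `Xᵢ ≤ 1` a.s., and `Sₙ = X₁ + ⋯ + Xₙ`, then
`P(Sₙ > 0 for all n ≥ 1)` equals `m` if `m > 0` and `0` if `m ≤ 0`. -/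
theorem stmt_8 {Ω : Type*} [MeasurableSpace Ω] (μ : Measure Ω) [IsProbabilityMeasure μ]
    (X : ℕ → Ω → ℤ) (hmeas : ∀ i, Measurable (X i))
    (hindep : iIndepFun X μ)
    (hident : ∀ i, IdentDistrib (X i) (X 0) μ μ)
    (hbound : ∀ i, ∀ᵐ ω ∂μ, X i ω ≤ 1)
    (hint : Integrable (fun ω => (X 0 ω : ℝ)) μ)
    (m : ℝ) (hmean : ∫ ω, (X 0 ω : ℝ) ∂μ = m) :
    μ {ω | ∀ n : ℕ, 1 ≤ n → 0 < ∑ i ∈ Finset.range n, X i ω}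
      = if 0 < m then ENNReal.ofReal m else 0 := by
  set E : ℕ → Set Ω := fun N => {ω | ∀ k ∈ Icc 1 N, 0 < ∑ i ∈ range k, X i ω}
  have hE : Tendsto (fun N => μ (E N)) atTop (𝓝 (μ (⋂ N, E N))) :=
    tendsto_measure_iInter_atTop (fun N => by measurability)
      (fun N N' h ω hω k hk => hω k (Icc_subset_Icc_right h hk)) ⟨0, measure_ne_top _ _⟩
  have hlaw := tendsto_lintegral_ofReal_sum_div (X := fun i ω => (X i ω : ℝ)) hint
    (fun i j hij => (hindep.indepFun hij).comp measurable_from_top measurable_from_top)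
    (fun i => (hident i).comp measurable_from_top) (c := 1)
    (fun i => (hbound i).mono fun ω h => by exact_mod_cast h)
  have hballot : ∀ᶠ N in atTop, _ = μ (E N) := (eventually_ne_atTop 0).mono fun N hN =>
    (measure_ballot_eq_lintegral_of_iid hmeas hindep hident hbound hN).symm
  have hinter : {ω | ∀ n : ℕ, 1 ≤ n → 0 < ∑ i ∈ range n, X i ω} = ⋂ N, E N := by
    ext ω
    simp only [E, Set.mem_iInter, Set.mem_ofPred_eq, mem_Icc]
    exact ⟨fun h N k hk => h k hk.1, fun h n hn => h n n ⟨hn, le_rfl⟩⟩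
  rw [hinter, tendsto_nhds_unique hE (hlaw.congr' hballot), hmean]
  split_ifs with hm
  · rfl
  · exact ENNReal.ofReal_of_nonpos (not_lt.1 hm)
end

section
/- (Cycle lemma.) Let X₁,…,X_n be integer-valued, cyclically interchangeable random variables each at most 1, with partial sums S_i = X₁+⋯+X_i. Then for every integer 0 ≤ k ≤ n, P(S_i > 0 for all 1 ≤ i ≤ n | S_n = k) = k/n. -/
/-!
Extend `X₁, …, Xₙ` periodically and let `S` be its partial sums, so that `S (m + n) = S m + k`
and `S` goes up by at most `1` per step. The rotation starting at `j` has positive partial sums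
iff `S j < S m` for `j < m ≤ j + n`. Such `j < n` are sent injectively by `S` onto the interval
`[c, c + k)`, `c = min_{m < n} S m`; the inverse sends `v` to the last `m < n` with `S m ≤ v`,
where the steps being at most `1` force `S m = v`. So exactly `k` of the `n` rotations are in the
event when `Sₙ = k`, and none otherwise. By cyclic exchangeability the `n` rotated events are
equally likely, and summing their probabilities gives `n · P(A) = k · P(Sₙ = k)`.
-/

open Finset MeasureTheory ProbabilityTheory Fin.NatCast
open scoped ENNReal

section StrictForwardMinima

variable {S : ℕ → ℤ} {n k : ℕ} {m₀ : ℕ}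

theorem lt_add_of_forall_Ioc_lt (hper : ∀ m, S (m + n) = S m + k) (hm₀ : m₀ < n)
    (hmin : ∀ m < n, S m₀ ≤ S m) {j : ℕ} (hj : j < n)
    (hjmin : ∀ m ∈ Ioc j (j + n), S j < S m) : S j < S m₀ + k := by
  have hm₀j : m₀ ≤ j := by
    by_contra! h
    exact (hjmin m₀ (mem_Ioc.2 ⟨h, by omega⟩)).not_ge (hmin j hj)
  exact hper m₀ ▸ hjmin (m₀ + n) (mem_Ioc.2 ⟨by omega, by omega⟩)

theorem exists_forall_Ioc_lt_of_mem_Ico (hstep : ∀ m, S (m + 1) ≤ S m + 1)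
    (hper : ∀ m, S (m + n) = S m + k) (hm₀ : m₀ < n) (hmin : ∀ m < n, S m₀ ≤ S m) {v : ℤ}
    (hv : v ∈ Ico (S m₀) (S m₀ + k)) :
    ∃ j < n, S j = v ∧ ∀ m ∈ Ioc j (j + n), S j < S m := by
  rw [mem_Ico] at hv
  obtain ⟨j, hj, hjmax⟩ := ({m ∈ range n | S m ≤ v} : Finset ℕ).exists_max_image id
    ⟨m₀, mem_filter.2 ⟨mem_range.2 hm₀, hv.1⟩⟩
  simp only [mem_filter, mem_range, id] at hj hjmax
  have hafter : ∀ m ∈ Ioc j (j + n), v < S m := by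
    intro m hm
    rw [mem_Ioc] at hm
    by_contra! h
    by_cases hmn : m < n
    · exact absurd (hjmax m ⟨hmn, h⟩) (by omega)
    · obtain ⟨r, rfl⟩ := Nat.exists_eq_add_of_le (not_lt.1 hmn)
      rw [add_comm n r, hper] at h
      linarith [hmin r (by omega)]
  have hSj : S j = v := by
    linarith [hstep j, hafter (j + 1) (mem_Ioc.2 ⟨by omega, by omega⟩)]
  exact ⟨j, hj.1, hSj, fun m hm => hSj ▸ hafter m hm⟩

theorem card_filter_forall_Ioc_lt (hstep : ∀ m, S (m + 1) ≤ S m + 1)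
    (hper : ∀ m, S (m + n) = S m + k) :
    #{j : Fin n | ∀ m ∈ Ioc (j : ℕ) (j + n), S j < S m} = k := by
  rcases Nat.eq_zero_or_pos n with rfl | hn
  · simpa [eq_comm] using hper 0
  obtain ⟨m₀, hm₀, hmin⟩ := (range n).exists_min_image S (nonempty_range_iff.2 hn.ne')
  replace hm₀ := mem_range.1 hm₀
  replace hmin : ∀ m < n, S m₀ ≤ S m := fun m hm => hmin m (mem_range.2 hm)
  calc #{j : Fin n | ∀ m ∈ Ioc (j : ℕ) (j + n), S j < S m}
      = #(Ico (S m₀) (S m₀ + k)) := by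
        refine card_bij (fun j _ => S j) (fun j hj => ?_) (fun j₁ hj₁ j₂ hj₂ h => ?_) ?_
        · simp only [mem_filter, mem_univ, true_and] at hj
          exact mem_Ico.2 ⟨hmin j j.2, lt_add_of_forall_Ioc_lt hper hm₀ hmin j.2 hj⟩
        · simp only [mem_filter, mem_univ, true_and, mem_Ioc] at hj₁ hj₂
          rcases lt_trichotomy j₁ j₂ with h' | h' | h'
          · exact absurd h (hj₁ j₂ ⟨h', by omega⟩).ne
          · exact h'
          · exact absurd h (hj₂ j₁ ⟨h', by omega⟩).ne'
        · intro v hv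
          obtain ⟨j, hj, hSj, hjmin⟩ :=
            exists_forall_Ioc_lt_of_mem_Ico hstep hper hm₀ hmin hv
          exact ⟨⟨j, hj⟩, by simpa using hjmin, hSj⟩
    _ = k := by simp

end StrictForwardMinima

section Periodic

variable {n : ℕ} [NeZero n]

def periodicPartialSum (f : Fin n → ℤ) (m : ℕ) : ℤ := ∑ i ∈ range m, f (i : Fin n)

namespace periodicPartialSum

variable (f : Fin n → ℤ)

theorem succ (m : ℕ) : periodicPartialSum f (m + 1) = periodicPartialSum f m + f (m : Fin n) :=
  sum_range_succ _ _

theorem add_period (m : ℕ) :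
    periodicPartialSum f (m + n) = periodicPartialSum f m + ∑ i, f i := by
  rw [periodicPartialSum, sum_range_add,
    ← Fin.sum_univ_eq_sum_range (fun t => f ((m + t : ℕ) : Fin n))]
  push_cast
  exact congrArg (periodicPartialSum f m + ·) (Equiv.sum_comp (Equiv.addLeft (m : Fin n)) f)

theorem sub_eq_sum_Iic (j i : Fin n) :
    periodicPartialSum f (j + (i + 1)) - periodicPartialSum f j = ∑ i' ∈ Iic i, f (i' + j) := by
  rw [periodicPartialSum, periodicPartialSum, sum_range_add, add_sub_cancel_left,
    Nat.range_succ_eq_Iic, ← Fin.map_valEmbedding_Iic, sum_map]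
  simp [add_comm]

theorem partialSums_rotate_pos_iff (j : Fin n) :
    (∀ i : Fin n, 0 < ∑ i' ∈ Iic i, f (i' + j)) ↔
      ∀ m ∈ Ioc (j : ℕ) (j + n), periodicPartialSum f j < periodicPartialSum f m := by
  constructor
  · intro h m hm
    rw [mem_Ioc] at hm
    have := h ⟨m - j - 1, by omega⟩
    rw [← sub_eq_sum_Iic, show (j : ℕ) + ((m - j - 1) + 1) = m by omega] at this
    linarith
  · intro h i
    rw [← sub_eq_sum_Iic]
    linarith [h (j + (i + 1)) (mem_Ioc.2 ⟨by omega, by omega⟩)]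

end periodicPartialSum

theorem card_rotations_partialSums_pos (f : Fin n → ℤ) (hf : ∀ i, f i ≤ 1) {k : ℕ}
    (hk : ∑ i, f i = k) : #{j : Fin n | ∀ i, 0 < ∑ i' ∈ Iic i, f (i' + j)} = k := by
  simp_rw [periodicPartialSum.partialSums_rotate_pos_iff]
  refine card_filter_forall_Ioc_lt (fun m => ?_) (fun m => ?_)
  · linarith [periodicPartialSum.succ f m, hf m]
  · rw [periodicPartialSum.add_period, hk]

def positiveWalksTo (n k : ℕ) : Set (Fin n → ℤ) :=
  {f | (∀ i, 0 < ∑ j ∈ Iic i, f j) ∧ ∑ i, f i = k}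

open Classical in
theorem card_rotations_mem_positiveWalksTo (f : Fin n → ℤ) (hf : ∀ i, f i ≤ 1) (k : ℕ) :
    #{j : Fin n | (fun i => f (i + j)) ∈ positiveWalksTo n k} =
      if ∑ i, f i = k then k else 0 := by
  have hrot : ∀ j : Fin n, ∑ i, f (i + j) = ∑ i, f i := fun j =>
    Equiv.sum_comp (Equiv.addRight j) f
  simp only [positiveWalksTo, Set.mem_ofPred_eq, hrot]
  split_ifs with hk
  · simpa [hk] using card_rotations_partialSums_pos f hf hk
  · simp [hk]

end Periodic

open Classical in
theorem sum_measure_eq_lintegral_card {Ω ι : Type*} [MeasurableSpace Ω] [Fintype ι]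
    (μ : Measure Ω) {A : ι → Set Ω} (hA : ∀ j, MeasurableSet (A j)) :
    ∑ j, μ (A j) = ∫⁻ ω, (#{j | ω ∈ A j} : ℝ≥0∞) ∂μ := by
  calc ∑ j, μ (A j) = ∑ j, ∫⁻ ω, (A j).indicator 1 ω ∂μ := by
        simp_rw [lintegral_indicator_one (hA _)]
    _ = ∫⁻ ω, ∑ j, (A j).indicator 1 ω ∂μ :=
        (lintegral_finsetSum _ fun j _ => measurable_one.indicator (hA j)).symm
    _ = ∫⁻ ω, (#{j | ω ∈ A j} : ℝ≥0∞) ∂μ := by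
        simp only [natCast_card_filter, Set.indicator_apply, Pi.one_apply]

theorem stmt_9_general {Ω : Type*} [MeasurableSpace Ω] (μ : Measure Ω)
    (n : ℕ) (hn : 1 ≤ n) (X : Fin n → Ω → ℤ) (hmeas : ∀ i, Measurable (X i))
    (hcyc : ∀ j : Fin n,
      IdentDistrib (fun ω => fun i : Fin n => X (i + j) ω)
        (fun ω => fun i : Fin n => X i ω) μ μ)
    (hbound : ∀ i, ∀ᵐ ω ∂μ, X i ω ≤ 1)
    (k : ℕ) :
    μ ({ω | ∀ i : Fin n, 0 < ∑ j ∈ Finset.Iic i, X j ω} ∩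
        {ω | ∑ j : Fin n, X j ω = (k : ℤ)})
      = ((k : ENNReal) / n) * μ {ω | ∑ j : Fin n, X j ω = (k : ℤ)} := by
  classical
  have : NeZero n := ⟨by omega⟩
  set T := {ω | ∑ j : Fin n, X j ω = (k : ℤ)}
  let E : Fin n → Set Ω := fun j => (fun ω i => X (i + j) ω) ⁻¹' positiveWalksTo n k
  have hB : MeasurableSet (positiveWalksTo n k) := (Set.to_countable _).measurableSet
  have hE : ∀ j, MeasurableSet (E j) := fun j => measurable_pi_lambda _ (fun i => hmeas _) hB
  have hT : MeasurableSet T := measurableSet_eq_fun (by fun_prop) measurable_const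
  have hcount :
      ∀ᵐ ω ∂μ, (#{j | ω ∈ E j} : ℝ≥0∞) = T.indicator (fun _ => (k : ℝ≥0∞)) ω := by
    filter_upwards [ae_all_iff.2 hbound] with ω hω
    rw [show #{j | ω ∈ E j} = _ from card_rotations_mem_positiveWalksTo (X · ω) hω k]
    by_cases hωT : ω ∈ T <;> simp_all [T]
  have key :
      (n : ℝ≥0∞) * μ ({ω | ∀ i : Fin n, 0 < ∑ j ∈ Iic i, X j ω} ∩ T) = k * μ T := calc
    _ = ∑ _j : Fin n, μ ((fun ω i => X i ω) ⁻¹' positiveWalksTo n k) := by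
      rw [sum_const, card_univ, Fintype.card_fin, nsmul_eq_mul]; rfl
    _ = ∑ j, μ (E j) := sum_congr rfl fun j _ => ((hcyc j).measure_mem_eq hB).symm
    _ = ∫⁻ ω, (#{j | ω ∈ E j} : ℝ≥0∞) ∂μ := sum_measure_eq_lintegral_card μ hE
    _ = ∫⁻ ω, T.indicator (fun _ => (k : ℝ≥0∞)) ω ∂μ := lintegral_congr_ae hcount
    _ = k * μ T := lintegral_indicator_const hT _
  rw [← ENNReal.mul_div_right_comm, ENNReal.eq_div_iff (by simp; omega) (by simp), key]

/-- Cycle lemma: let `X₁,…,Xₙ` be integer-valued, cyclically interchangeable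
random variables, each at most `1` a.s., with partial sums `Sᵢ = X₁ + ⋯ + Xᵢ`.
Then for every `0 ≤ k ≤ n`,
`P(Sᵢ > 0 ∀ 1 ≤ i ≤ n ∧ Sₙ = k) = (k/n)·P(Sₙ = k)`, i.e. the conditional
probability given `Sₙ = k` (an event of positive probability) is `k/n`. -/
theorem stmt_9 {Ω : Type*} [MeasurableSpace Ω] (μ : Measure Ω) [IsProbabilityMeasure μ]
    (n : ℕ) (hn : 1 ≤ n) (X : Fin n → Ω → ℤ) (hmeas : ∀ i, Measurable (X i))
    (hcyc : ∀ j : Fin n,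
      IdentDistrib (fun ω => fun i : Fin n => X (i + j) ω)
        (fun ω => fun i : Fin n => X i ω) μ μ)
    (hbound : ∀ i, ∀ᵐ ω ∂μ, X i ω ≤ 1)
    (k : ℕ) (hk : k ≤ n)
    (hpos : 0 < μ {ω | ∑ j : Fin n, X j ω = (k : ℤ)}) :
    μ ({ω | ∀ i : Fin n, 0 < ∑ j ∈ Finset.Iic i, X j ω} ∩
        {ω | ∑ j : Fin n, X j ω = (k : ℤ)})
      = ((k : ENNReal) / n) * μ {ω | ∑ j : Fin n, X j ω = (k : ℤ)} :=
  stmt_9_general μ n hn X hmeas hcyc hbound k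
end
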